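/- arXiv:2007.00414 — 6 statements merged into one kernel-verified Lean document; each statement's English description precedes it below -/
import Mathlib

section
/- Let m be a positive even integer and A, B ⊆ ℤ/mℤ with A ∪ B = ℤ/mℤ and |A ∩ B| = 2. If R_A(n) = R_B(n) for all n ∈ ℤ/mℤ, then |A| = |B| = m/2 + 1. -/
/-- Number of unordered pairs (a, a') from A (possibly equal) with a + a' = n. -/
def Rf {m : ℕ} (A : Finset (ZMod m)) (n : ZMod m) : ℕ :=
  ((A ×ˢ A).filter (fun p => p.1 + p.2 = n ∧ p.1.val ≤ p.2.val)).card

/-- Number of ordered pairs (c, d) ∈ C × D with c + d = n. -/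
def Rord {m : ℕ} (C D : Finset (ZMod m)) (n : ZMod m) : ℕ :=
  ((C ×ˢ D).filter (fun p => p.1 + p.2 = n)).card

/-- Characteristic function of A applied to the residue class of an integer. -/
def chi {m : ℕ} (A : Finset (ZMod m)) (k : ℤ) : ℤ :=
  if (k : ZMod m) ∈ A then 1 else 0

lemma sum_Rf_aux {m : ℕ} [NeZero m] (A : Finset (ZMod m)) :
    2 * ∑ n : ZMod m, Rf A n = A.card * A.card + A.card := by
  unfold Rf
  set S := (A ×ˢ A).filter (fun p => p.1.val ≤ p.2.val) with hS
  set T := (A ×ˢ A).filter (fun p => p.2.val ≤ p.1.val) with hT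
  have hsum : ∑ n : ZMod m, ((A ×ˢ A).filter (fun p => p.1 + p.2 = n ∧ p.1.val ≤ p.2.val)).card
      = S.card := by
    rw [Finset.card_eq_sum_card_fiberwise
      (f := fun p => p.1 + p.2) (t := Finset.univ) (fun x _ => Finset.mem_univ _)]
    apply Finset.sum_congr rfl
    intro n _
    rw [hS, Finset.filter_filter]
    congr 1
    ext p
    simp only [Finset.mem_filter]
    tauto
  have hST : S.card = T.card := by
    apply Finset.card_bij' (fun p _ => p.swap) (fun p _ => p.swap)
    all_goals intro p hp
    all_goals first
      | rfl
      | (simp only [hS, hT, Finset.mem_filter, Finset.mem_product, Prod.fst_swap,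
          Prod.snd_swap] at hp ⊢; tauto)
  have hunion : S ∪ T = A ×ˢ A := by
    rw [hS, hT, ← Finset.filter_or]
    exact Finset.filter_true_of_mem (fun p _ => le_total _ _)
  have hinter : S ∩ T = (A ×ˢ A).filter (fun p => p.1 = p.2) := by
    rw [hS, hT, ← Finset.filter_and]
    congr 1
    ext p
    constructor
    · rintro ⟨h1, h2⟩
      exact ZMod.val_injective m (le_antisymm h1 h2)
    · intro hpe
      rw [hpe]
      exact ⟨le_rfl, le_rfl⟩
  have hdiag : ((A ×ˢ A).filter (fun p => p.1 = p.2)).card = A.card := by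
    rw [← Finset.diag_eq_filter, Finset.diag_card]
  have hcards := Finset.card_union_add_card_inter S T
  rw [hunion, hinter, hdiag, Finset.card_product] at hcards
  omega

theorem stmt0 (m : ℕ) [NeZero m] (hm : Even m) (A B : Finset (ZMod m))
    (hU : A ∪ B = Finset.univ) (hI : (A ∩ B).card = 2)
    (h : ∀ n : ZMod m, Rf A n = Rf B n) :
    A.card = m / 2 + 1 ∧ B.card = m / 2 + 1 := by
  have hA := sum_Rf_aux A
  have hB := sum_Rf_aux B
  have hsum : (∑ n : ZMod m, Rf A n) = ∑ n : ZMod m, Rf B n :=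
    Finset.sum_congr rfl (fun n _ => h n)
  rw [hsum, hB] at hA
  have hcard : A.card = B.card := by
    rcases lt_trichotomy A.card B.card with hlt | heq | hgt
    · nlinarith
    · exact heq
    · nlinarith
  have hUC := Finset.card_union_add_card_inter A B
  rw [hU, hI, Finset.card_univ] at hUC
  have : Fintype.card (ZMod m) = m := ZMod.card m
  obtain ⟨k, hk⟩ := hm
  omega
end

section
/- Let m be a positive even integer. Let A, B ⊆ ℤ/mℤ with A ∪ B = ℤ/mℤ and A ∩ B = {r₁, r₂} with r₁ ≠ r₂. Suppose R_A(n) = R_B(n) for all n ∈ ℤ/mℤ. Then for every integer n with n odd, χ_A(n − r₁) + χ_A(n − r₂) = 1 + R_{{r₁,r₂}}(n̄), where χ_A is the characteristic function of A (applied to the residue class of its argument) and r₁, r₂ are integer representatives of the two intersection elements. -/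
open Finset

namespace StmtAux
variable {m : ℕ} [NeZero m]

def ind (C : Finset (ZMod m)) (x : ZMod m) : ℤ := if x ∈ C then 1 else 0

lemma sum_ind (C : Finset (ZMod m)) : ∑ x : ZMod m, ind C x = C.card := by
  simp [ind]

lemma rord_card (C D : Finset (ZMod m)) (n : ZMod m) :
    Rord C D n = (univ.filter (fun x => x ∈ C ∧ n - x ∈ D)).card := by
  unfold Rord
  refine Finset.card_bij' (fun p _ => p.1) (fun x _ => (x, n - x)) ?_ ?_ ?_ ?_
  · intro p hp
    simp only [mem_filter, mem_product] at hp ⊢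
    refine ⟨mem_univ _, hp.1.1, ?_⟩
    have h2 : n - p.1 = p.2 := by rw [← hp.2]; ring
    rw [h2]; exact hp.1.2
  · intro x hx
    simp only [mem_filter, mem_product] at hx ⊢
    exact ⟨⟨hx.2.1, hx.2.2⟩, by ring⟩
  · rintro ⟨a, b⟩ hp
    simp only [mem_filter, mem_product] at hp
    have h2 : n - a = b := by rw [← hp.2]; ring
    simp [h2]
  · intro x hx; rfl

lemma rord_conv (C D : Finset (ZMod m)) (n : ZMod m) :
    (Rord C D n : ℤ) = ∑ x : ZMod m, ind C x * ind D (n - x) := by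
  rw [rord_card, Finset.card_filter]
  push_cast
  refine Finset.sum_congr rfl fun x _ => ?_
  by_cases h1 : x ∈ C <;> by_cases h2 : n - x ∈ D <;> simp [ind, h1, h2]

lemma rord_add_diag (C : Finset (ZMod m)) (n : ZMod m) :
    Rord C C n + (C.filter fun a => a + a = n).card = 2 * Rf C n := by
  classical
  have hswap : ((C ×ˢ C).filter (fun p => p.1 + p.2 = n ∧ p.2.val ≤ p.1.val)).card
      = Rf C n := by
    unfold Rf
    refine Finset.card_bij' (fun p _ => (p.2, p.1)) (fun p _ => (p.2, p.1)) ?_ ?_ ?_ ?_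
    · intro p hp
      simp only [mem_filter, mem_product] at hp ⊢
      exact ⟨⟨hp.1.2, hp.1.1⟩, by rw [add_comm]; exact hp.2.1, hp.2.2⟩
    · intro p hp
      simp only [mem_filter, mem_product] at hp ⊢
      exact ⟨⟨hp.1.2, hp.1.1⟩, by rw [add_comm]; exact hp.2.1, hp.2.2⟩
    · intro p hp; rfl
    · intro p hp; rfl
  have hunion : ((C ×ˢ C).filter (fun p => p.1 + p.2 = n ∧ p.1.val ≤ p.2.val))
      ∪ ((C ×ˢ C).filter (fun p => p.1 + p.2 = n ∧ p.2.val ≤ p.1.val))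
      = (C ×ˢ C).filter (fun p => p.1 + p.2 = n) := by
    rw [← Finset.filter_or]
    apply Finset.filter_congr
    intro p _
    constructor
    · rintro (⟨h, _⟩ | ⟨h, _⟩) <;> exact h
    · intro h
      rcases le_total p.1.val p.2.val with hle | hle
      · exact Or.inl ⟨h, hle⟩
      · exact Or.inr ⟨h, hle⟩
  have hinter : ((C ×ˢ C).filter (fun p => p.1 + p.2 = n ∧ p.1.val ≤ p.2.val))
      ∩ ((C ×ˢ C).filter (fun p => p.1 + p.2 = n ∧ p.2.val ≤ p.1.val))
      = (C ×ˢ C).filter (fun p => p.1 + p.2 = n ∧ p.1 = p.2) := by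
    rw [← Finset.filter_and]
    apply Finset.filter_congr
    intro p _
    constructor
    · rintro ⟨⟨h, h1⟩, _, h2⟩
      exact ⟨h, ZMod.val_injective m (le_antisymm h1 h2)⟩
    · rintro ⟨h, heq⟩
      exact ⟨⟨h, by rw [heq]⟩, h, by rw [heq]⟩
  have hdiag : ((C ×ˢ C).filter (fun p => p.1 + p.2 = n ∧ p.1 = p.2)).card
      = (C.filter fun a => a + a = n).card := by
    refine Finset.card_bij' (fun p _ => p.1) (fun a _ => (a, a)) ?_ ?_ ?_ ?_
    · intro p hp
      simp only [mem_filter, mem_product] at hp ⊢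
      refine ⟨hp.1.1, ?_⟩
      have h1 := hp.2.1
      rw [← hp.2.2] at h1
      exact h1
    · intro a ha
      simp only [mem_filter, mem_product] at ha ⊢
      exact ⟨⟨ha.1, ha.1⟩, ha.2, trivial⟩
    · rintro ⟨a, b⟩ hp
      simp only [mem_filter, mem_product] at hp
      simp [hp.2.2]
    · intro a ha; rfl
  have hkey := Finset.card_union_add_card_inter
    ((C ×ˢ C).filter (fun p => p.1 + p.2 = n ∧ p.1.val ≤ p.2.val))
    ((C ×ˢ C).filter (fun p => p.1 + p.2 = n ∧ p.2.val ≤ p.1.val))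
  rw [hunion, hinter, hdiag, hswap] at hkey
  unfold Rord Rf at *
  omega

lemma rord_eq_two_rf (C : Finset (ZMod m)) (n : ZMod m)
    (hd : ∀ a : ZMod m, a + a ≠ n) :
    Rord C C n = 2 * Rf C n := by
  have h1 := rord_add_diag C n
  have h0 : (C.filter fun a => a + a = n) = ∅ :=
    Finset.filter_false_of_mem (fun a _ => hd a)
  rw [h0] at h1; simpa using h1

/-- no diagonal solutions for odd n, even m -/
lemma no_diag (hm : Even m) (n : ℤ) (hn : Odd n) (a : ZMod m) :
    a + a ≠ (n : ZMod m) := by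
  intro hEq
  have h1 : ((n - 2 * (a.val : ℤ) : ℤ) : ZMod m) = 0 := by
    push_cast
    rw [ZMod.natCast_val, ZMod.cast_id]
    rw [← hEq]; ring
  rw [ZMod.intCast_zmod_eq_zero_iff_dvd] at h1
  obtain ⟨k, hk⟩ := hm
  obtain ⟨c, hc⟩ := h1
  have hmk : (m : ℤ) = k + k := by push_cast [hk]; ring
  have heven : Even n := by
    refine ⟨k * c + a.val, ?_⟩
    rw [hmk] at hc
    linarith [hc]
  exact (Int.not_odd_iff_even.mpr heven) hn

lemma sum_rord (C : Finset (ZMod m)) :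
    ∑ n : ZMod m, (Rord C C n : ℤ) = (C.card : ℤ) ^ 2 := by
  have h1 : ∀ n : ZMod m, (Rord C C n : ℤ) = ∑ x : ZMod m, ind C x * ind C (n - x) :=
    fun n => rord_conv C C n
  simp_rw [h1]
  rw [Finset.sum_comm]
  have h2 : ∀ x : ZMod m, ∑ n : ZMod m, ind C x * ind C (n - x) = ind C x * C.card := by
    intro x
    rw [← Finset.mul_sum]
    congr 1
    calc ∑ n : ZMod m, ind C (n - x)
        = ∑ n : ZMod m, ind C n := Fintype.sum_equiv (Equiv.subRight x) _ _ (fun y => rfl)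
      _ = C.card := sum_ind C
  simp_rw [h2]
  rw [← Finset.sum_mul, sum_ind]
  ring

lemma sum_diag (C : Finset (ZMod m)) :
    ∑ n : ZMod m, ((C.filter fun a => a + a = n).card : ℤ) = C.card := by
  simp_rw [Finset.card_filter]
  push_cast
  rw [Finset.sum_comm]
  have h2 : ∀ a : ZMod m, (∑ n : ZMod m, if a + a = n then (1:ℤ) else 0) = 1 := by
    intro a; simp
  rw [Finset.sum_congr rfl (fun a _ => h2 a)]
  simp

end StmtAux
theorem stmt2 (m : ℕ) [NeZero m] (hm : Even m) (A B : Finset (ZMod m))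
    (hU : A ∪ B = Finset.univ) (r₁ r₂ : ℤ)
    (hne : (r₁ : ZMod m) ≠ (r₂ : ZMod m))
    (hI : A ∩ B = {(r₁ : ZMod m), (r₂ : ZMod m)})
    (h : ∀ n : ZMod m, Rf A n = Rf B n) :
    ∀ n : ℤ, Odd n →
      chi A (n - r₁) + chi A (n - r₂)
        = 1 + (Rf ({(r₁ : ZMod m), (r₂ : ZMod m)} : Finset (ZMod m)) (n : ZMod m) : ℤ) := by
  classical
  intro n hn
  open StmtAux in
  set S : Finset (ZMod m) := {(r₁ : ZMod m), (r₂ : ZMod m)} with hS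
  set t : ZMod m := (n : ZMod m) with ht
  have hd : ∀ a : ZMod m, a + a ≠ t := StmtAux.no_diag hm n hn
  -- pointwise indicator identity
  have hpt : ∀ x : ZMod m, ind A x + ind B x = 1 + ind S x := by
    intro x
    have hx1 : x ∈ A ∨ x ∈ B := by
      have : x ∈ A ∪ B := by rw [hU]; exact Finset.mem_univ x
      simpa [Finset.mem_union] using this
    have hx2 : (x ∈ A ∧ x ∈ B) ↔ x ∈ S := by
      rw [← hI]; simp [Finset.mem_inter]
    unfold StmtAux.ind
    by_cases hA : x ∈ A <;> by_cases hB : x ∈ B <;> simp_all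
  -- cardinalities
  have hcu : (Finset.univ : Finset (ZMod m)).card = m := by
    simp [ZMod.card]
  have hcs : S.card = 2 := Finset.card_pair hne
  have hAB : (A.card : ℤ) + B.card = m + 2 := by
    have h1 := Finset.card_union_add_card_inter A B
    rw [hU, hI, hcu, hcs] at h1
    exact_mod_cast h1.symm
  have hsum2 : ∀ C : Finset (ZMod m),
      (C.card : ℤ) ^ 2 + C.card = ∑ k : ZMod m, 2 * (Rf C k : ℤ) := by
    intro C
    have h1 : ∀ k : ZMod m, (Rord C C k : ℤ)
        + ((C.filter fun a => a + a = k).card : ℤ) = 2 * Rf C k := by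
      intro k; exact_mod_cast StmtAux.rord_add_diag C k
    calc (C.card : ℤ) ^ 2 + C.card
        = (∑ k : ZMod m, (Rord C C k : ℤ))
          + ∑ k : ZMod m, ((C.filter fun a => a + a = k).card : ℤ) := by
          rw [StmtAux.sum_rord, StmtAux.sum_diag]
      _ = ∑ k : ZMod m, ((Rord C C k : ℤ)
          + ((C.filter fun a => a + a = k).card : ℤ)) := Finset.sum_add_distrib.symm
      _ = ∑ k : ZMod m, 2 * (Rf C k : ℤ) := Finset.sum_congr rfl (fun k _ => h1 k)
  have hABeq : (A.card : ℤ) = B.card := by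
    have e1 := hsum2 A
    have e2 := hsum2 B
    have e3 : ∑ k : ZMod m, 2 * (Rf A k : ℤ) = ∑ k : ZMod m, 2 * (Rf B k : ℤ) :=
      Finset.sum_congr rfl (fun k _ => by rw [h k])
    have e4 : (A.card : ℤ) ^ 2 + A.card = (B.card : ℤ) ^ 2 + B.card := by
      rw [e1, e2, e3]
    have ha : (0:ℤ) ≤ A.card := Int.natCast_nonneg _
    have hb : (0:ℤ) ≤ B.card := Int.natCast_nonneg _
    nlinarith [e4, ha, hb]
  have h2A : 2 * (A.card : ℤ) = m + 2 := by linarith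
  -- convolution notation
  have hconvAA : ∑ x : ZMod m, ind A x * ind A (t - x)
      = ∑ x : ZMod m, ind B x * ind B (t - x) := by
    rw [← StmtAux.rord_conv, ← StmtAux.rord_conv,
      StmtAux.rord_eq_two_rf A t hd, StmtAux.rord_eq_two_rf B t hd, h t]
  have hconvSS : ∑ x : ZMod m, ind S x * ind S (t - x) = 2 * (Rf S t : ℤ) := by
    rw [← StmtAux.rord_conv, StmtAux.rord_eq_two_rf S t hd]
    push_cast; ring
  have hconvsym : ∑ x : ZMod m, ind A x * ind S (t - x)
      = ∑ x : ZMod m, ind S x * ind A (t - x) := by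
    refine Fintype.sum_equiv (Equiv.subLeft t) _ _ (fun x => ?_)
    simp only [Equiv.subLeft_apply, sub_sub_cancel]
    ring
  have hsumA2 : ∑ x : ZMod m, ind A (t - x) = (A.card : ℤ) := by
    refine Eq.trans ?_ (StmtAux.sum_ind A)
    exact Fintype.sum_equiv (Equiv.subLeft t) _ _ (fun x => rfl)
  have hsumS2 : ∑ x : ZMod m, ind S (t - x) = (S.card : ℤ) := by
    refine Eq.trans ?_ (StmtAux.sum_ind S)
    exact Fintype.sum_equiv (Equiv.subLeft t) _ _ (fun x => rfl)
  have hone : ∑ _x : ZMod m, (1:ℤ) = m := by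
    simp [Finset.card_univ, ZMod.card]
  -- evaluate conv S A
  have hconvSA : ∑ x : ZMod m, ind S x * ind A (t - x)
      = chi A (n - r₁) + chi A (n - r₂) := by
    have step1 : ∑ x : ZMod m, ind S x * ind A (t - x)
        = ∑ x ∈ S, ind A (t - x) := by
      conv_rhs => rw [← Finset.univ_inter S, ← Finset.sum_ite_mem]
      refine Finset.sum_congr rfl (fun x _ => ?_)
      unfold StmtAux.ind
      by_cases hx : x ∈ S <;> simp [hx]
    rw [step1, hS, Finset.sum_pair hne]
    unfold chi StmtAux.ind
    have c1 : ((n - r₁ : ℤ) : ZMod m) = t - (r₁ : ZMod m) := by push_cast [ht]; ring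
    have c2 : ((n - r₂ : ℤ) : ZMod m) = t - (r₂ : ZMod m) := by push_cast [ht]; ring
    rw [c1, c2]
  -- main expansion
  have hexp : ∑ x : ZMod m, (ind B x * ind B (t - x) + ind A x + ind A (t - x)
        + ind A x * ind S (t - x) + ind S x * ind A (t - x))
      = ∑ x : ZMod m, (ind A x * ind A (t - x) + 1 + ind S x + ind S (t - x)
        + ind S x * ind S (t - x)) := by
    refine Finset.sum_congr rfl (fun x _ => ?_)
    have e1 : ind B x = 1 + ind S x - ind A x := by linarith [hpt x]
    have e2 : ind B (t - x) = 1 + ind S (t - x) - ind A (t - x) := by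
      linarith [hpt (t - x)]
    rw [e1, e2]; ring
  simp only [Finset.sum_add_distrib] at hexp
  rw [StmtAux.sum_ind A, hsumA2, hsumS2, StmtAux.sum_ind S, hone, hconvsym, hconvSA,
    hconvSS, ← hconvAA, hcs] at hexp
  -- conclude
  push_cast at hexp
  linarith [hexp, h2A]
end

section
/- Let m be a positive even integer. Let A, B ⊆ ℤ/mℤ with A ∪ B = ℤ/mℤ and A ∩ B = {r₁, r₂} with r₁ ≠ r₂. Suppose R_A(n) = R_B(n) for all n ∈ ℤ/mℤ. Then for every even integer n (with representative 0 ≤ n ≤ m−1), χ_A(n − r₁) + χ_A(n − r₂) = 2 + R_{{r₁,r₂}}(n̄) − χ_A(n/2) − χ_A((n+m)/2). -/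
set_option linter.unusedSectionVars false


def Dc {m : ℕ} (C : Finset (ZMod m)) (n : ZMod m) : ℕ :=
  (C.filter (fun a => a + a = n)).card

variable {m : ℕ} [NeZero m]

lemma Rord_comm (C D : Finset (ZMod m)) (n : ZMod m) : Rord C D n = Rord D C n := by
  unfold Rord
  apply Finset.card_bij' (fun p _ => (p.2, p.1)) (fun p _ => (p.2, p.1)) <;>
    simp only [Finset.mem_filter, Finset.mem_product] <;> intros <;>
    simp_all [add_comm]

lemma Rord_union_left {C C' D : Finset (ZMod m)} (hd : Disjoint C C') (n : ZMod m) :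
    Rord (C ∪ C') D n = Rord C D n + Rord C' D n := by
  unfold Rord
  rw [Finset.union_product, Finset.filter_union, Finset.card_union_of_disjoint]
  refine Finset.disjoint_left.2 ?_
  rintro ⟨a, b⟩ h1 h2
  simp only [Finset.mem_filter, Finset.mem_product] at h1 h2
  exact Finset.disjoint_left.1 hd h1.1.1 h2.1.1

lemma Rord_union_right {C D D' : Finset (ZMod m)} (hd : Disjoint D D') (n : ZMod m) :
    Rord C (D ∪ D') n = Rord C D n + Rord C D' n := by
  rw [Rord_comm, Rord_union_left hd, Rord_comm D, Rord_comm D']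

lemma Rord_univ_left (D : Finset (ZMod m)) (n : ZMod m) :
    Rord Finset.univ D n = D.card := by
  unfold Rord
  apply Finset.card_bij' (fun p _ => p.2) (fun d _ => (n - d, d))
  · intro p hp
    simp only [Finset.mem_filter, Finset.mem_product] at hp
    exact hp.1.2
  · intro d hd
    simp only [Finset.mem_filter, Finset.mem_product]
    exact ⟨⟨Finset.mem_univ _, hd⟩, by ring⟩
  · intro p hp
    simp only [Finset.mem_filter, Finset.mem_product] at hp
    exact Prod.ext (by rw [← hp.2]; ring) rfl
  · intro d hd
    rfl

lemma Rord_singleton_right (C : Finset (ZMod m)) (x n : ZMod m) :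
    Rord C {x} n = if n - x ∈ C then 1 else 0 := by
  unfold Rord
  have he : ((C ×ˢ ({x} : Finset (ZMod m))).filter (fun p => p.1 + p.2 = n)) =
      if n - x ∈ C then {(n - x, x)} else ∅ := by
    split_ifs with h
    · ext ⟨a, b⟩
      simp only [Finset.mem_filter, Finset.mem_product, Finset.mem_singleton, Prod.mk.injEq]
      constructor
      · rintro ⟨⟨ha, rfl⟩, hab⟩
        exact ⟨by rw [← hab]; ring, rfl⟩
      · rintro ⟨rfl, rfl⟩
        exact ⟨⟨h, rfl⟩, by ring⟩
    · refine Finset.filter_false_of_mem ?_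
      rintro ⟨a, b⟩ hmem hab
      simp only [Finset.mem_product, Finset.mem_singleton] at hmem
      obtain ⟨ha, hb⟩ := hmem
      exact h (by rw [show n - x = a by rw [← hab, hb]; ring]; exact ha)
  rw [he]
  split_ifs <;> simp

lemma Rord_add_Dc (C : Finset (ZMod m)) (n : ZMod m) :
    Rord C C n + Dc C n = 2 * Rf C n := by
  classical
  set S := (C ×ˢ C).filter (fun p => p.1 + p.2 = n) with hS
  set a := (S.filter (fun p => p.1.val < p.2.val)).card with ha
  set b := (S.filter (fun p => p.1 = p.2)).card with hb
  set c := (S.filter (fun p => p.2.val < p.1.val)).card with hc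
  have hRf : Rf C n = a + b := by
    unfold Rf
    rw [ha, hb, hS, Finset.filter_filter, Finset.filter_filter, ← Finset.card_union_of_disjoint]
    · congr 1
      ext p
      simp only [Finset.mem_union, Finset.mem_filter, Finset.mem_product]
      constructor
      · rintro ⟨hp, hsum, hle⟩
        rcases lt_or_eq_of_le hle with h' | h'
        · exact Or.inl ⟨hp, hsum, h'⟩
        · exact Or.inr ⟨hp, hsum, ZMod.val_injective m h'⟩
      · rintro (⟨hp, hsum, h'⟩ | ⟨hp, hsum, h'⟩)
        · exact ⟨hp, hsum, le_of_lt h'⟩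
        · exact ⟨hp, hsum, by rw [h']⟩
    · refine Finset.disjoint_left.2 ?_
      rintro p h1 h2
      simp only [Finset.mem_filter] at h1 h2
      rw [h2.2.2] at h1
      exact absurd h1.2.2 (lt_irrefl _)
  have hsplit : S.card = a + b + c := by
    have hset : S = (S.filter (fun p => p.1.val < p.2.val) ∪ S.filter (fun p => p.1 = p.2))
        ∪ S.filter (fun p => p.2.val < p.1.val) := by
      ext p
      simp only [Finset.mem_union, Finset.mem_filter]
      constructor
      · intro hp
        rcases lt_trichotomy p.1.val p.2.val with h' | h' | h'
        · exact Or.inl (Or.inl ⟨hp, h'⟩)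
        · exact Or.inl (Or.inr ⟨hp, ZMod.val_injective m h'⟩)
        · exact Or.inr ⟨hp, h'⟩
      · rintro ((⟨hp, _⟩ | ⟨hp, _⟩) | ⟨hp, _⟩) <;> exact hp
    rw [ha, hb, hc, ← Finset.card_union_of_disjoint, ← Finset.card_union_of_disjoint, ← hset]
    · refine Finset.disjoint_left.2 ?_
      rintro p h1 h2
      simp only [Finset.mem_union, Finset.mem_filter] at h1 h2
      rcases h1 with ⟨_, h'⟩ | ⟨_, h'⟩
      · omega
      · rw [h'] at h2; omega
    · refine Finset.disjoint_left.2 ?_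
      rintro p h1 h2
      simp only [Finset.mem_filter] at h1 h2
      rw [h2.2] at h1
      exact absurd h1.2 (lt_irrefl _)
  have hgt : c = a := by
    rw [ha, hc]
    refine Finset.card_bij' (fun p _ => (p.2, p.1)) (fun p _ => (p.2, p.1)) ?_ ?_ ?_ ?_
    · rintro ⟨u, v⟩ hp
      simp only [hS, Finset.mem_filter, Finset.mem_product] at hp ⊢
      obtain ⟨⟨⟨h1, h2⟩, hsum⟩, hlt⟩ := hp
      exact ⟨⟨⟨h2, h1⟩, by rw [← hsum]; ring⟩, hlt⟩
    · rintro ⟨u, v⟩ hp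
      simp only [hS, Finset.mem_filter, Finset.mem_product] at hp ⊢
      obtain ⟨⟨⟨h1, h2⟩, hsum⟩, hlt⟩ := hp
      exact ⟨⟨⟨h2, h1⟩, by rw [← hsum]; ring⟩, hlt⟩
    · intro p hp; rfl
    · intro p hp; rfl
  have hdiag : b = Dc C n := by
    rw [hb]
    unfold Dc
    refine Finset.card_bij' (fun p _ => p.1) (fun x _ => (x, x)) ?_ ?_ ?_ ?_
    · rintro ⟨u, v⟩ hp
      simp only [hS, Finset.mem_filter, Finset.mem_product] at hp ⊢
      obtain ⟨⟨⟨h1, h2⟩, hsum⟩, heq⟩ := hp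
      subst heq
      exact ⟨h1, hsum⟩
    · intro x hx
      simp only [hS, Finset.mem_filter, Finset.mem_product] at hx ⊢
      exact ⟨⟨⟨hx.1, hx.1⟩, hx.2⟩, trivial⟩
    · rintro ⟨u, v⟩ hp
      simp only [hS, Finset.mem_filter] at hp
      exact Prod.ext rfl hp.2
    · intro x hx; rfl
  have hR : Rord C C n = S.card := rfl
  omega

lemma sum_Rord (C : Finset (ZMod m)) : ∑ n : ZMod m, Rord C C n = C.card * C.card := by
  rw [← Finset.card_product]
  exact (Finset.card_eq_sum_card_fiberwise (fun p _ => Finset.mem_univ (p.1 + p.2))).symm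

lemma sum_Dc (C : Finset (ZMod m)) : ∑ n : ZMod m, Dc C n = C.card :=
  (Finset.card_eq_sum_card_fiberwise (fun a _ => Finset.mem_univ (a + a))).symm

lemma double_eq_zero (hm : Even m) {x : ZMod m} (hx : x + x = 0) :
    x = 0 ∨ x = ((m / 2 : ℕ) : ZMod m) := by
  have hvx : ((x.val : ℕ) : ZMod m) = x := by
    simp [ZMod.natCast_val, ZMod.cast_id]
  have hcast : ((x.val + x.val : ℕ) : ZMod m) = 0 := by push_cast [hvx]; exact hx
  have hdvd : m ∣ x.val + x.val := (ZMod.natCast_eq_zero_iff _ _).1 hcast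
  have hlt : x.val < m := ZMod.val_lt x
  obtain ⟨t, ht⟩ := hm
  have : x.val = 0 ∨ x.val = m / 2 := by
    obtain ⟨c, hc⟩ := hdvd
    have hm0 : 0 < m := Nat.pos_of_ne_zero (NeZero.ne m)
    have hc2 : c ≤ 1 := by nlinarith
    interval_cases c <;> omega
  rcases this with h' | h'
  · left
    rw [← hvx, h']
    simp
  · right
    rw [← hvx, h']
lemma half_ne_zero (hm : Even m) : ((m / 2 : ℕ) : ZMod m) ≠ 0 := by
  have hm0 : 0 < m := Nat.pos_of_ne_zero (NeZero.ne m)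
  obtain ⟨t, ht⟩ := hm
  intro hcon
  have := (ZMod.natCast_eq_zero_iff _ _).1 hcon
  obtain ⟨c, hc⟩ := this
  have h2 : m / 2 < m := Nat.div_lt_self hm0 (by norm_num)
  have h3 : 0 < m / 2 := by omega
  rcases Nat.eq_zero_or_pos c with rfl | hcpos
  · omega
  · nlinarith

lemma half_add_half : Even m → ((m / 2 : ℕ) : ZMod m) + ((m / 2 : ℕ) : ZMod m) = 0 := by
  rintro ⟨t, ht⟩
  have : (m / 2) + (m / 2) = m := by omega
  rw [← Nat.cast_add, this, ZMod.natCast_self]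

lemma Dc_eq (hm : Even m) (C : Finset (ZMod m)) (u : ZMod m) :
    Dc C (u + u) = (if u ∈ C then 1 else 0)
      + (if u + ((m / 2 : ℕ) : ZMod m) ∈ C then 1 else 0) := by
  classical
  set h2 := ((m / 2 : ℕ) : ZMod m) with hh
  have hfil : C.filter (fun a => a + a = u + u) = C.filter (fun a => a = u ∨ a = u + h2) := by
    apply Finset.filter_congr
    intro a _
    constructor
    · intro hsum
      have hz : (a - u) + (a - u) = 0 := by linear_combination hsum
      rcases double_eq_zero hm hz with h' | h'
      · exact Or.inl (by linear_combination h')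
      · exact Or.inr (by rw [hh]; linear_combination h')
    · rintro (rfl | rfl)
      · rfl
      · rw [show u + h2 + (u + h2) = u + u + (h2 + h2) by ring, half_add_half hm, add_zero]
  have hne2 : u ≠ u + h2 := by
    intro hcon
    exact half_ne_zero hm (left_eq_add.1 hcon)
  unfold Dc
  rw [hfil, Finset.filter_or, Finset.card_union_of_disjoint, Finset.filter_eq', Finset.filter_eq']
  · split_ifs <;> simp
  · refine Finset.disjoint_left.2 ?_
    intro a h1 h2'
    simp only [Finset.mem_filter] at h1 h2'
    exact hne2 (h1.2.symm.trans h2'.2)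

lemma Rord_pair_right (C : Finset (ZMod m)) {x y : ZMod m} (hxy : x ≠ y) (n : ZMod m) :
    Rord C {x, y} n = (if n - x ∈ C then 1 else 0) + (if n - y ∈ C then 1 else 0) := by
  rw [show ({x, y} : Finset (ZMod m)) = {x} ∪ {y} from rfl,
    Rord_union_right (Finset.disjoint_singleton.2 hxy), Rord_singleton_right, Rord_singleton_right]

lemma two_mul_sum_Rf (C : Finset (ZMod m)) :
    2 * ∑ n : ZMod m, Rf C n = C.card * C.card + C.card := by
  have h1 : ∑ n : ZMod m, (Rord C C n + Dc C n) = ∑ n : ZMod m, 2 * Rf C n :=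
    Finset.sum_congr rfl fun n _ => Rord_add_Dc C n
  rw [Finset.sum_add_distrib, sum_Rord, sum_Dc, ← Finset.mul_sum] at h1
  omega

theorem stmt3 (m : ℕ) [NeZero m] (hm : Even m) (A B : Finset (ZMod m))
    (hU : A ∪ B = Finset.univ) (r₁ r₂ : ℤ)
    (hne : (r₁ : ZMod m) ≠ (r₂ : ZMod m))
    (hI : A ∩ B = {(r₁ : ZMod m), (r₂ : ZMod m)})
    (h : ∀ n : ZMod m, Rf A n = Rf B n) :
    ∀ n : ℤ, 0 ≤ n → n ≤ (m : ℤ) - 1 → Even n →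
      chi A (n - r₁) + chi A (n - r₂)
        = 2 + (Rf ({(r₁ : ZMod m), (r₂ : ZMod m)} : Finset (ZMod m)) (n : ZMod m) : ℤ)
          - chi A (n / 2) - chi A ((n + m) / 2) := by
  intro n hn0 hn1 hneven
  classical
  obtain ⟨k, hk⟩ := hneven
  obtain ⟨t, ht⟩ := hm
  have hmeven : Even m := ⟨t, ht⟩
  set I : Finset (ZMod m) := {(r₁ : ZMod m), (r₂ : ZMod m)} with hIdef
  set Ac : Finset (ZMod m) := Finset.univ \ A with hAcdef
  set nb : ZMod m := (n : ZMod m) with hnbdef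
  set u : ZMod m := ((k : ℤ) : ZMod m) with hudef
  -- structural facts
  have hIA : I ⊆ A := hI ▸ Finset.inter_subset_left
  have hIB : I ⊆ B := hI ▸ Finset.inter_subset_right
  have hdisjAAc : Disjoint A Ac := Finset.disjoint_sdiff
  have hdisjAcI : Disjoint Ac I := by
    refine Finset.disjoint_left.2 ?_
    intro x hx hxI
    rw [hAcdef, Finset.mem_sdiff] at hx
    exact hx.2 (hIA hxI)
  have hAunion : A ∪ Ac = Finset.univ := Finset.union_sdiff_of_subset (Finset.subset_univ A)
  have hBeq : B = Ac ∪ I := by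
    ext x
    rw [Finset.mem_union, hAcdef, Finset.mem_sdiff]
    constructor
    · intro hxB
      by_cases hxA : x ∈ A
      · exact Or.inr (hI ▸ Finset.mem_inter.2 ⟨hxA, hxB⟩)
      · exact Or.inl ⟨Finset.mem_univ x, hxA⟩
    · rintro (hx | hx)
      · have hxu : x ∈ A ∪ B := hU ▸ Finset.mem_univ x
        rcases Finset.mem_union.1 hxu with h' | h'
        · exact absurd h' hx.2
        · exact h'
      · exact hIB hx
  -- cardinalities
  have hI2 : I.card = 2 := by
    rw [hIdef, Finset.card_insert_of_notMem (by simpa using hne), Finset.card_singleton]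
  have hcard1 : A.card + B.card = m + 2 := by
    have h1 := Finset.card_union_add_card_inter A B
    rw [hU, hI, hI2, Finset.card_univ, ZMod.card] at h1
    omega
  have hcardAB : A.card = B.card := by
    have hA2 := two_mul_sum_Rf A
    have hB2 := two_mul_sum_Rf B
    have hs : ∑ j : ZMod m, Rf A j = ∑ j : ZMod m, Rf B j :=
      Finset.sum_congr rfl fun j _ => h j
    rw [hs] at hA2
    rcases Nat.lt_trichotomy A.card B.card with H | H | H
    · have := Nat.mul_self_lt_mul_self H; omega
    · exact H
    · have := Nat.mul_self_lt_mul_self H; omega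
  have hcA : 2 * A.card = m + 2 := by omega
  have hAcCard : A.card + Ac.card = m := by
    have h1 := Finset.card_sdiff_of_subset (Finset.subset_univ A)
    have h2 : A.card ≤ (Finset.univ : Finset (ZMod m)).card := Finset.card_le_univ A
    rw [Finset.card_univ, ZMod.card] at h1 h2
    rw [hAcdef]
    omega
  -- ordered counting equations
  have e1 : Rord B B nb = Rord Ac Ac nb + Rord Ac I nb + (Rord I Ac nb + Rord I I nb) := by
    rw [hBeq, Rord_union_left hdisjAcI, Rord_union_right hdisjAcI, Rord_union_right hdisjAcI]
  have e2 : Rord A A nb + Rord A Ac nb = A.card := by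
    rw [← Rord_union_right hdisjAAc, hAunion, Rord_comm, Rord_univ_left]
  have e3 : Rord A Ac nb + Rord Ac Ac nb = Ac.card := by
    rw [← Rord_union_left hdisjAAc, hAunion, Rord_univ_left]
  have e4 : Rord A I nb + Rord Ac I nb = 2 := by
    rw [← Rord_union_left hdisjAAc, hAunion, Rord_univ_left, hI2]
  have e5 : Rord A I nb
      = (if nb - (r₁ : ZMod m) ∈ A then 1 else 0) + (if nb - (r₂ : ZMod m) ∈ A then 1 else 0) := by
    rw [hIdef]
    exact Rord_pair_right A hne nb
  have e6 : Rord I Ac nb = Rord Ac I nb := Rord_comm I Ac nb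
  have e7 : Rord I I nb + Dc I nb = 2 * Rf I nb := Rord_add_Dc I nb
  have e8a : Rord A A nb + Dc A nb = 2 * Rf A nb := Rord_add_Dc A nb
  have e8b : Rord B B nb + Dc B nb = 2 * Rf B nb := Rord_add_Dc B nb
  have hnq : Rf A nb = Rf B nb := h nb
  have e9 : Dc A nb + Dc B nb = Dc Finset.univ nb + Dc I nb := by
    unfold Dc
    have h1 := Finset.card_union_add_card_inter (A.filter (fun a => a + a = nb))
      (B.filter (fun a => a + a = nb))
    rw [← Finset.filter_union, ← Finset.filter_inter_distrib, hU, hI] at h1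
    omega
  have hnbd : nb = u + u := by
    rw [hnbdef, hudef, hk]
    push_cast
    ring
  have e10 : Dc (Finset.univ : Finset (ZMod m)) nb = 2 := by
    rw [hnbd, Dc_eq hmeven]
    simp
  have e11 : Dc A nb = (if u ∈ A then 1 else 0)
      + (if u + ((m / 2 : ℕ) : ZMod m) ∈ A then 1 else 0) := by
    rw [hnbd, Dc_eq hmeven]
  -- chi translations
  have c1 : chi A (n - r₁) = ((if nb - (r₁ : ZMod m) ∈ A then 1 else 0 : ℕ) : ℤ) := by
    unfold chi
    have hcast : ((n - r₁ : ℤ) : ZMod m) = nb - (r₁ : ZMod m) := by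
      rw [hnbdef]; push_cast; ring
    rw [hcast]
    split_ifs <;> simp
  have c2 : chi A (n - r₂) = ((if nb - (r₂ : ZMod m) ∈ A then 1 else 0 : ℕ) : ℤ) := by
    unfold chi
    have hcast : ((n - r₂ : ℤ) : ZMod m) = nb - (r₂ : ZMod m) := by
      rw [hnbdef]; push_cast; ring
    rw [hcast]
    split_ifs <;> simp
  have c3 : chi A (n / 2) = ((if u ∈ A then 1 else 0 : ℕ) : ℤ) := by
    unfold chi
    have hdiv : n / 2 = k := by omega
    rw [hdiv, ← hudef]
    split_ifs <;> simp
  have c4 : chi A ((n + m) / 2) = ((if u + ((m / 2 : ℕ) : ZMod m) ∈ A then 1 else 0 : ℕ) : ℤ) := by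
    unfold chi
    have hdiv : (n + m) / 2 = k + t := by omega
    have hmt : (m / 2 : ℕ) = t := by omega
    have hcast : ((k + t : ℤ) : ZMod m) = u + ((m / 2 : ℕ) : ZMod m) := by
      rw [hudef, hmt]; push_cast; ring
    rw [hdiv, hcast]
    split_ifs <;> simp
  rw [c1, c2, c3, c4]
  omega
end

section
/- Let m ≡ 2 (mod 4) be a positive integer, and let A, B ⊆ ℤ/mℤ with A ∪ B = ℤ/mℤ and A ∩ B = {r, r + m/2} for some r. If R_A(n) = R_B(n) for all n ∈ ℤ/mℤ, then B = A + m/2. -/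
def ind {m : ℕ} (A : Finset (ZMod m)) (x : ZMod m) : ℤ :=
  if x ∈ A then 1 else 0

def diagc {m : ℕ} (A : Finset (ZMod m)) (n : ZMod m) : ℕ :=
  (A.filter (fun a => a + a = n)).card

lemma rord_add_diag {m : ℕ} [NeZero m] (A : Finset (ZMod m)) (n : ZMod m) :
    Rord A A n + diagc A n = 2 * Rf A n := by
  classical
  set P := (A ×ˢ A).filter (fun p => p.1 + p.2 = n) with hP
  have h1 : ((A ×ˢ A).filter (fun p => p.1 + p.2 = n ∧ p.1.val ≤ p.2.val))
      = P.filter (fun p => p.1.val ≤ p.2.val) := by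
    rw [hP, Finset.filter_filter]
  have h2 : (P.filter (fun p => p.2.val ≤ p.1.val)).card
      = (P.filter (fun p => p.1.val ≤ p.2.val)).card := by
    apply Finset.card_bij (fun p _ => (p.2, p.1))
    · intro p hp
      simp only [Finset.mem_filter, hP, Finset.mem_product] at hp ⊢
      exact ⟨⟨⟨hp.1.1.2, hp.1.1.1⟩, by rw [add_comm]; exact hp.1.2⟩, hp.2⟩
    · intro p hp q hq hpq
      cases p; cases q; simp_all [Prod.ext_iff]
    · intro p hp
      refine ⟨(p.2, p.1), ?_, rfl⟩
      simp only [Finset.mem_filter, hP, Finset.mem_product] at hp ⊢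
      exact ⟨⟨⟨hp.1.1.2, hp.1.1.1⟩, by rw [add_comm]; exact hp.1.2⟩, hp.2⟩
  have hunion : P.filter (fun p => p.1.val ≤ p.2.val) ∪ P.filter (fun p => p.2.val ≤ p.1.val) = P := by
    rw [← Finset.filter_or]
    apply Finset.filter_true_of_mem
    intro p _; exact le_total _ _
  have hinter : P.filter (fun p => p.1.val ≤ p.2.val) ∩ P.filter (fun p => p.2.val ≤ p.1.val)
      = P.filter (fun p => p.1 = p.2) := by
    rw [← Finset.filter_and]
    apply Finset.filter_congr
    intro p _
    constructor
    · rintro ⟨h1', h2'⟩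
      exact ZMod.val_injective m (le_antisymm h1' h2')
    · intro he; rw [he]; exact ⟨le_rfl, le_rfl⟩
  have hdiag : (P.filter (fun p => p.1 = p.2)).card = diagc A n := by
    apply Finset.card_bij (fun p _ => p.1)
    · intro p hp
      simp only [Finset.mem_filter, hP, Finset.mem_product, diagc] at hp ⊢
      obtain ⟨⟨⟨ha, _⟩, hsum⟩, heq⟩ := hp
      exact ⟨ha, by rw [← heq] at hsum; exact hsum⟩
    · intro p hp q hq hpq
      simp only [Finset.mem_filter] at hp hq
      cases p; cases q; simp_all [Prod.ext_iff]
    · intro a ha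
      simp only [diagc, Finset.mem_filter] at ha
      exact ⟨(a, a), by simp [Finset.mem_filter, hP, Finset.mem_product, ha.1, ha.2], rfl⟩
  have := Finset.card_union_add_card_inter (P.filter (fun p => p.1.val ≤ p.2.val))
    (P.filter (fun p => p.2.val ≤ p.1.val))
  rw [hunion, hinter, hdiag, h2] at this
  unfold Rord Rf
  rw [h1, ← hP]
  omega

lemma rord_eq_sum {m : ℕ} [NeZero m] (C D : Finset (ZMod m)) (n : ZMod m) :
    (Rord C D n : ℤ) = ∑ x : ZMod m, ind C x * ind D (n - x) := by
  classical
  unfold Rord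
  rw [Finset.card_filter]
  push_cast
  rw [Finset.sum_product]
  rw [← Finset.sum_subset (Finset.subset_univ C) (by
    intro x _ hx
    simp [ind, hx])]
  apply Finset.sum_congr rfl
  intro x hx
  have h1 : ind C x = 1 := by simp [ind, hx]
  rw [h1, one_mul]
  have h2 : ∀ y : ZMod m, (x + y = n) = (y = n - x) := by
    intro y; simp [eq_sub_iff_add_eq, eq_comm, add_comm]
  simp only [h2]
  rw [Finset.sum_ite_eq' D (n - x) (fun _ => (1:ℤ))]
  simp [ind]

lemma sum_rord {m : ℕ} [NeZero m] (C : Finset (ZMod m)) :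
    ∑ n : ZMod m, Rord C C n = C.card * C.card := by
  classical
  rw [← Finset.card_product C C]
  rw [Finset.card_eq_sum_card_fiberwise (f := fun p => p.1 + p.2) (t := Finset.univ)
    (fun p _ => Finset.mem_univ _)]
  rfl

lemma sum_diagc {m : ℕ} [NeZero m] (C : Finset (ZMod m)) :
    ∑ n : ZMod m, diagc C n = C.card := by
  classical
  rw [Finset.card_eq_sum_card_fiberwise (f := fun a => a + a) (t := Finset.univ)
    (fun p _ => Finset.mem_univ _)]
  rfl

theorem stmt4 (m : ℕ) [NeZero m] (hm : m % 4 = 2) (A B : Finset (ZMod m))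
    (hU : A ∪ B = Finset.univ) (r : ZMod m)
    (hI : A ∩ B = {r, r + ((m / 2 : ℕ) : ZMod m)})
    (h : ∀ n : ZMod m, Rf A n = Rf B n) :
    B = A.image (fun a => a + ((m / 2 : ℕ) : ZMod m)) := by
  classical
  have hm2 : m % 2 = 0 := by omega
  have hto : (m / 2) % 2 = 1 := by omega
  have htt : m / 2 + m / 2 = m := by omega
  have hmpos : 0 < m := Nat.pos_of_ne_zero (NeZero.ne m)
  have htlt : m / 2 < m := by omega
  set τ : ZMod m := ((m / 2 : ℕ) : ZMod m) with hτ
  have hτval : τ.val = m / 2 := by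
    rw [hτ, ZMod.val_natCast_of_lt htlt]
  have τ2 : τ + τ = 0 := by
    rw [hτ, ← Nat.cast_add, htt, ZMod.natCast_self]
  have hnegτ : -τ = τ := neg_eq_of_add_eq_zero_left τ2
  have τne : τ ≠ 0 := by
    intro h0
    rw [h0] at hτval
    simp [ZMod.val_zero] at hτval
    omega
  have hrne : r ≠ r + τ := by
    intro he
    have : τ = 0 := by
      have := congrArg (fun z => z - r) he
      simpa using this.symm
    exact τne this
  -- parity flip
  have hflip : ∀ y : ZMod m, (y + τ).val % 2 ≠ y.val % 2 := by
    intro y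
    have h1 : (y + τ).val = (y.val + m / 2) % m := by
      rw [ZMod.val_add, hτval]
    have h2 : y.val < m := ZMod.val_lt y
    rcases Nat.lt_or_ge (y.val + m / 2) m with hlt | hge
    · rw [Nat.mod_eq_of_lt hlt] at h1
      omega
    · rw [Nat.mod_eq_sub_mod hge, Nat.mod_eq_of_lt (by omega)] at h1
      omega
  -- no doubles for odd n
  have hnd : ∀ (C : Finset (ZMod m)) (n : ZMod m), n.val % 2 = 1 → diagc C n = 0 := by
    intro C n hn
    unfold diagc
    rw [Finset.card_eq_zero, Finset.filter_eq_empty_iff]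
    intro a _ he
    have hpar : (a + a).val % 2 = 0 := by
      rw [ZMod.val_add]
      rw [Nat.mod_mod_of_dvd _ (by omega : 2 ∣ m)]
      omega
    rw [he, hn] at hpar
    omega
  -- cardinality
  have hcard : A.card = B.card := by
    have hsum : ∀ C : Finset (ZMod m),
        C.card * C.card + C.card = ∑ n : ZMod m, 2 * Rf C n := by
      intro C
      have := Finset.sum_congr rfl (fun n (_ : n ∈ (Finset.univ : Finset (ZMod m))) =>
        rord_add_diag C n)
      rw [Finset.sum_add_distrib, sum_rord, sum_diagc] at this
      exact this
    have he : A.card * A.card + A.card = B.card * B.card + B.card := by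
      rw [hsum A, hsum B]
      exact Finset.sum_congr rfl (fun n _ => by rw [h n])
    rcases Nat.lt_trichotomy A.card B.card with hl | he' | hl
    · nlinarith
    · exact he'
    · nlinarith
  -- D function
  set D : ZMod m → ℤ := fun x => ind A x - ind B x with hD
  have hmemU : ∀ y : ZMod m, y ∈ A ∨ y ∈ B := by
    intro y
    have : y ∈ A ∪ B := by rw [hU]; exact Finset.mem_univ y
    exact Finset.mem_union.mp this
  have hmemI : ∀ y : ZMod m, (y ∈ A ∧ y ∈ B) ↔ (y = r ∨ y = r + τ) := by
    intro y
    rw [← Finset.mem_inter, hI]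
    simp
  -- Claim1
  have hAB : ∀ y : ZMod m, ind A y + ind B y
      = 1 + (if y = r then 1 else 0) + (if y = r + τ then 1 else 0) := by
    intro y
    by_cases h1 : y ∈ A <;> by_cases h2 : y ∈ B
    · rcases (hmemI y).mp ⟨h1, h2⟩ with he | he
      · subst he; simp [ind, h1, h2, hrne]
      · subst he; simp [ind, h1, h2, Ne.symm hrne]
    · have hy : ¬(y = r ∨ y = r + τ) := fun hc => h2 ((hmemI y).mpr hc).2
      push_neg at hy
      simp [ind, h1, h2, hy.1, hy.2]
    · have hy : ¬(y = r ∨ y = r + τ) := fun hc => h1 ((hmemI y).mpr hc).1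
      push_neg at hy
      simp [ind, h1, h2, hy.1, hy.2]
    · exact absurd (hmemU y) (by simp [h1, h2])
  -- sum of D over univ is zero
  have hsumD : ∑ x : ZMod m, D x = 0 := by
    rw [hD]
    simp only [Finset.sum_sub_distrib]
    have h1 : ∑ x : ZMod m, ind A x = A.card := by
      unfold ind
      rw [Finset.sum_boole]
      simp [Finset.filter_mem_eq_inter]
    have h2 : ∑ x : ZMod m, ind B x = B.card := by
      unfold ind
      rw [Finset.sum_boole]
      simp [Finset.filter_mem_eq_inter]
    rw [h1, h2, hcard]
    ring
  -- cross symmetry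
  have hcross : ∀ n : ZMod m, ∑ x : ZMod m, ind A x * ind B (n - x)
      = ∑ x : ZMod m, ind B x * ind A (n - x) := by
    intro n
    apply Fintype.sum_equiv (Equiv.subLeft n)
    intro x
    simp [Equiv.subLeft, mul_comm]
  -- Claim3
  have hkey : ∀ n : ZMod m, (Rord A A n : ℤ) - Rord B B n = D (n - r) + D (n - r - τ) := by
    intro n
    rw [rord_eq_sum, rord_eq_sum]
    have step1 : (∑ x : ZMod m, ind A x * ind A (n - x))
        - (∑ x : ZMod m, ind B x * ind B (n - x))
        = ∑ x : ZMod m, D x * (ind A (n - x) + ind B (n - x)) := by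
      have hpt : ∀ x : ZMod m, D x * (ind A (n - x) + ind B (n - x))
          = (ind A x * ind A (n - x) - ind B x * ind B (n - x))
            + (ind A x * ind B (n - x) - ind B x * ind A (n - x)) := by
        intro x; rw [hD]; ring
      rw [Finset.sum_congr rfl (fun x _ => hpt x), Finset.sum_add_distrib,
        Finset.sum_sub_distrib, Finset.sum_sub_distrib, hcross n]
      ring
    rw [step1]
    have step2 : ∀ x : ZMod m, D x * (ind A (n - x) + ind B (n - x))
        = D x + (if x = n - r then D x else 0) + (if x = n - r - τ then D x else 0) := by
      intro x
      rw [hAB (n - x)]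
      have e1 : (n - x = r) = (x = n - r) :=
        propext ⟨fun he => by linear_combination -he, fun he => by linear_combination -he⟩
      have e2 : (n - x = r + τ) = (x = n - r - τ) :=
        propext ⟨fun he => by linear_combination -he, fun he => by linear_combination -he⟩
      simp only [e1, e2]
      split_ifs <;> ring
    rw [Finset.sum_congr rfl (fun x _ => step2 x), Finset.sum_add_distrib,
      Finset.sum_add_distrib, hsumD,
      Finset.sum_ite_eq' Finset.univ (n - r) D,
      Finset.sum_ite_eq' Finset.univ (n - r - τ) D]
    simp
  -- diag relation
  have hdiagrel : ∀ n : ZMod m, D (n - r) + D (n - r - τ) = (diagc B n : ℤ) - diagc A n := by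
    intro n
    have h1 := rord_add_diag A n
    have h2 := rord_add_diag B n
    have h3 := h n
    have h4 := hkey n
    have h1' : (Rord A A n : ℤ) + diagc A n = 2 * Rf A n := by exact_mod_cast h1
    have h2' : (Rord B B n : ℤ) + diagc B n = 2 * Rf B n := by exact_mod_cast h2
    have h3' : (Rf A n : ℤ) = Rf B n := by exact_mod_cast h3
    linarith
  -- E lemma
  have hE : ∀ x : ZMod m, D x + D (x + τ) = 0 := by
    intro x
    rcases Nat.even_or_odd (x + r).val with hpar | hpar
    · -- take n = x + r + τ, which is odd
      have hodd : (x + r + τ).val % 2 = 1 := by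
        have := hflip (x + r)
        rcases Nat.even_or_odd (x + r + τ).val with h' | h'
        · exfalso; apply this
          rw [Nat.even_iff] at hpar h'; omega
        · rwa [Nat.odd_iff] at h'
      have hd := hdiagrel (x + r + τ)
      rw [hnd A _ hodd, hnd B _ hodd] at hd
      have e1 : x + r + τ - r = x + τ := by ring
      have e2 : x + r + τ - r - τ = x := by ring
      rw [e2, e1] at hd
      simpa [add_comm] using hd
    · -- take n = x + r
      have hodd : (x + r).val % 2 = 1 := by rwa [Nat.odd_iff] at hpar
      have hd := hdiagrel (x + r)
      rw [hnd A _ hodd, hnd B _ hodd] at hd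
      have e1 : x + r - r = x := by ring
      have e2 : x + r - r - τ = x - τ := by ring
      rw [e2, e1, sub_eq_add_neg, hnegτ] at hd
      simpa using hd
  -- from D values to membership transfer
  have htrans : ∀ x : ZMod m, (x ∈ A ∧ x ∉ B) → (x + τ ∈ B ∧ x + τ ∉ A) := by
    intro x ⟨hxA, hxB⟩
    have he := hE x
    by_cases h1 : x + τ ∈ A <;> by_cases h2 : x + τ ∈ B <;>
      simp [hD, ind, hxA, hxB, h1, h2] at he ⊢
  have htrans' : ∀ x : ZMod m, (x ∈ B ∧ x ∉ A) → (x + τ ∈ A ∧ x + τ ∉ B) := by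
    intro x ⟨hxB, hxA⟩
    have he := hE x
    by_cases h1 : x + τ ∈ A <;> by_cases h2 : x + τ ∈ B <;>
      simp [hD, ind, hxA, hxB, h1, h2] at he ⊢
  -- I is τ-invariant and contained in both
  have hIsub : ∀ y : ZMod m, (y = r ∨ y = r + τ) → y ∈ A ∧ y ∈ B :=
    fun y hy => (hmemI y).mpr hy
  have hIinv : ∀ y : ZMod m, (y = r ∨ y = r + τ) → (y + τ = r ∨ y + τ = r + τ) := by
    rintro y (rfl | rfl)
    · right; rfl
    · left; rw [add_assoc, τ2, add_zero]
  -- conclusion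
  ext b
  simp only [Finset.mem_image]
  constructor
  · intro hbB
    by_cases hbA : b ∈ A
    · have hbI : b = r ∨ b = r + τ := (hmemI b).mp ⟨hbA, hbB⟩
      refine ⟨b + τ, (hIsub _ (hIinv b hbI)).1, ?_⟩
      rw [add_assoc, τ2, add_zero]
    · obtain ⟨h1, _⟩ := htrans' b ⟨hbB, hbA⟩
      exact ⟨b + τ, h1, by rw [add_assoc, τ2, add_zero]⟩
  · rintro ⟨a, haA, rfl⟩
    by_cases haB : a ∈ B
    · have haI : a = r ∨ a = r + τ := (hmemI a).mp ⟨haA, haB⟩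
      exact (hIsub _ (hIinv a haI)).2
    · exact (htrans a ⟨haA, haB⟩).1
end

section
/- Let m be a positive even integer and let A, B ⊆ ℤ/mℤ with A ∪ B = ℤ/mℤ and A ∩ B = {r, r + m/2}. Then R_A(n) = R_B(n) for all n ∈ ℤ/mℤ if and only if B = A + m/2. -/
open Finset
set_option linter.unusedSectionVars false

namespace Aux
variable {m : ℕ} [NeZero m]
def ind (C : Finset (ZMod m)) (x : ZMod m) : ℤ := if x ∈ C then 1 else 0

lemma rord_eq_sum (C D : Finset (ZMod m)) (n : ZMod m) :
    (Rord C D n : ℤ) = ∑ x : ZMod m, ind C x * ind D (n - x) := by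
  have hcard : Rord C D n = (univ.filter (fun x : ZMod m => x ∈ C ∧ n - x ∈ D)).card := by
    unfold Rord
    apply Finset.card_bij (fun p _ => p.1)
    · intro p hp
      simp only [mem_filter, mem_product] at hp
      simp only [mem_filter, mem_univ, true_and]
      refine ⟨hp.1.1, ?_⟩
      have : n - p.1 = p.2 := by rw [← hp.2]; ring
      rw [this]; exact hp.1.2
    · intro p hp q hq hpq
      simp only [mem_filter, mem_product] at hp hq
      have : p.2 = q.2 := by
        have h1 := hp.2; have h2 := hq.2
        rw [hpq] at h1
        exact add_left_cancel (h1.trans h2.symm)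
      exact Prod.ext hpq this
    · intro x hx
      simp only [mem_filter, mem_univ, true_and] at hx
      refine ⟨(x, n - x), ?_, rfl⟩
      simp only [mem_filter, mem_product]
      exact ⟨⟨hx.1, hx.2⟩, by ring⟩
  rw [hcard, Finset.card_filter]
  push_cast
  refine Finset.sum_congr rfl fun x _ => ?_
  by_cases h1 : x ∈ C <;> by_cases h2 : n - x ∈ D <;> simp [ind, h1, h2]

lemma diag_eq_sum (C : Finset (ZMod m)) (n : ZMod m) :
    ((C.filter (fun a => a + a = n)).card : ℤ)
      = ∑ x : ZMod m, if x + x = n then ind C x else 0 := by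
  have : ∑ x : ZMod m, (if x + x = n then ind C x else 0)
      = ∑ x ∈ C, (if x + x = n then ind C x else 0) :=
    (Finset.sum_subset (Finset.subset_univ C) (fun x _ hx => by simp [ind, hx])).symm
  rw [this, Finset.card_filter]
  push_cast
  exact Finset.sum_congr rfl fun x hx => by simp [ind, hx]

lemma two_rf (C : Finset (ZMod m)) (n : ZMod m) :
    2 * Rf C n = Rord C C n + (C.filter (fun a => a + a = n)).card := by
  classical
  set S := (C ×ˢ C).filter (fun p => p.1 + p.2 = n) with hS
  have hR : Rf C n = (S.filter (fun p => p.1.val ≤ p.2.val)).card := by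
    rw [hS, Finset.filter_filter]; rfl
  have hswap : (S.filter (fun p => p.1.val ≤ p.2.val)).card
      = (S.filter (fun p => p.2.val ≤ p.1.val)).card := by
    apply Finset.card_bij (fun p _ => p.swap)
    · intro p hp
      simp only [mem_filter, mem_product, hS] at hp ⊢
      refine ⟨⟨⟨hp.1.1.2, hp.1.1.1⟩, ?_⟩, hp.2⟩
      rw [← hp.1.2]; exact add_comm _ _
    · intro p _ q _ h
      exact Prod.swap_injective h
    · intro p hp
      refine ⟨p.swap, ?_, by simp⟩
      simp only [mem_filter, mem_product, hS] at hp ⊢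
      refine ⟨⟨⟨hp.1.1.2, hp.1.1.1⟩, ?_⟩, hp.2⟩
      rw [← hp.1.2]; exact add_comm _ _
  have hunion : (S.filter (fun p => p.1.val ≤ p.2.val))
      ∪ (S.filter (fun p => p.2.val ≤ p.1.val)) = S := by
    rw [← Finset.filter_or]
    exact Finset.filter_true_of_mem fun p _ => le_total _ _
  have hinter : (S.filter (fun p => p.1.val ≤ p.2.val))
      ∩ (S.filter (fun p => p.2.val ≤ p.1.val)) = S.filter (fun p => p.1 = p.2) := by
    rw [← Finset.filter_and]
    refine Finset.filter_congr fun p _ => ?_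
    constructor
    · intro ⟨h1, h2⟩; exact ZMod.val_injective m (le_antisymm h1 h2)
    · intro h; rw [h]; exact ⟨le_refl _, le_refl _⟩
  have hdiag : (S.filter (fun p => p.1 = p.2)).card = (C.filter (fun a => a + a = n)).card := by
    apply Finset.card_bij (fun p _ => p.1)
    · intro p hp
      simp only [mem_filter, mem_product, hS] at hp ⊢
      refine ⟨hp.1.1.1, ?_⟩
      rw [← hp.1.2, ← hp.2]
    · intro p hp q hq hpq
      simp only [mem_filter, mem_product, hS] at hp hq
      exact Prod.ext hpq (by rw [← hp.2, ← hq.2, hpq])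
    · intro a ha
      simp only [mem_filter] at ha
      exact ⟨(a, a), by simp [hS, mem_filter, mem_product, ha.1, ha.2], rfl⟩
  have hcard := Finset.card_union_add_card_inter
    (S.filter (fun p => p.1.val ≤ p.2.val)) (S.filter (fun p => p.2.val ≤ p.1.val))
  rw [hunion, hinter, hdiag, ← hswap, ← hR] at hcard
  have : Rord C C n = S.card := rfl
  omega


section half
variable (hm : Even m)

include hm in
lemma half_add_half : ((m / 2 : ℕ) : ZMod m) + ((m / 2 : ℕ) : ZMod m) = 0 := by
  rw [← Nat.cast_add]
  obtain ⟨k, hk⟩ := hm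
  have : m / 2 + m / 2 = m := by omega
  rw [this, ZMod.natCast_self]

include hm in
lemma half_ne_zero : ((m / 2 : ℕ) : ZMod m) ≠ 0 := by
  have hm2 : 2 ≤ m := by
    have := NeZero.pos m
    obtain ⟨k, hk⟩ := hm
    omega
  rw [Ne, ZMod.natCast_eq_zero_iff]
  exact Nat.not_dvd_of_pos_of_lt (by omega) (by omega)

end half

section main
variable (hm : Even m) (A B : Finset (ZMod m))
    (hU : A ∪ B = Finset.univ) (r : ZMod m)
    (hI : A ∩ B = {r, r + ((m / 2 : ℕ) : ZMod m)})

include hU in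
lemma mem_or (y : ZMod m) : y ∈ A ∨ y ∈ B := by
  have : y ∈ A ∪ B := by rw [hU]; exact mem_univ y
  simpa [Finset.mem_union] using this

include hI in
lemma mem_and_iff (y : ZMod m) :
    (y ∈ A ∧ y ∈ B) ↔ (y = r ∨ y = r + ((m / 2 : ℕ) : ZMod m)) := by
  have : y ∈ A ∩ B ↔ y ∈ ({r, r + ((m / 2 : ℕ) : ZMod m)} : Finset (ZMod m)) := by rw [hI]
  simpa [Finset.mem_inter, Finset.mem_insert, Finset.mem_singleton] using this

include hm hU hI in
lemma ind_add_ind (y : ZMod m) :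
    ind A y + ind B y = 1 + (if y = r then 1 else 0)
      + (if y = r + ((m / 2 : ℕ) : ZMod m) then 1 else 0) := by
  set h : ZMod m := ((m / 2 : ℕ) : ZMod m) with hh
  have hrh : r ≠ r + h := by
    intro hcon
    exact half_ne_zero hm (by linear_combination -hcon)
  have hrA : r ∈ A ∧ r ∈ B := (mem_and_iff A B r hI r).2 (Or.inl rfl)
  have hrhA : r + h ∈ A ∧ r + h ∈ B := (mem_and_iff A B r hI _).2 (Or.inr rfl)
  by_cases hA : y ∈ A <;> by_cases hB : y ∈ B
  · rcases (mem_and_iff A B r hI y).1 ⟨hA, hB⟩ with hy | hy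
    · simp [ind, hA, hB, hy, hrh, hrA.1, hrA.2]
    · simp [ind, hA, hB, hy, Ne.symm hrh, hrhA.1, hrhA.2, ← hh]
  · have h1 : y ≠ r := fun hy => hB (hy ▸ hrA.2)
    have h2 : y ≠ r + h := fun hy => hB (hy ▸ hrhA.2)
    simp [ind, hA, hB, h1, h2]
  · have h1 : y ≠ r := fun hy => hA (hy ▸ hrA.1)
    have h2 : y ≠ r + h := fun hy => hA (hy ▸ hrhA.1)
    simp [ind, hA, hB, h1, h2]
  · rcases mem_or A B hU y with h | h <;> [exact absurd h hA; exact absurd h hB]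

include hm hU hI in
lemma master (n : ZMod m) :
    2 * (Rf A n : ℤ) - 2 * (Rf B n : ℤ)
      = (∑ x : ZMod m, (ind A x - ind B x))
        + (ind A (n - r) - ind B (n - r))
        + (ind A (n - (r + ((m / 2 : ℕ) : ZMod m))) - ind B (n - (r + ((m / 2 : ℕ) : ZMod m))))
        + ∑ x : ZMod m, (if x + x = n then ind A x - ind B x else 0) := by
  set h : ZMod m := ((m / 2 : ℕ) : ZMod m) with hh
  have e1 : (2 : ℤ) * Rf A n = Rord A A n + ((A.filter (fun a => a + a = n)).card : ℤ) := by
    exact_mod_cast congrArg (Nat.cast : ℕ → ℤ) (two_rf A n)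
  have e2 : (2 : ℤ) * Rf B n = Rord B B n + ((B.filter (fun a => a + a = n)).card : ℤ) := by
    exact_mod_cast congrArg (Nat.cast : ℕ → ℤ) (two_rf B n)
  have hAB : ∑ x : ZMod m, ind A x * ind B (n - x)
      = ∑ x : ZMod m, ind B x * ind A (n - x) := by
    apply Finset.sum_nbij' (fun x => n - x) (fun x => n - x) <;>
      simp [mul_comm, sub_sub_cancel]
  have hard : (Rord A A n : ℤ) - Rord B B n
      = ∑ x : ZMod m, (ind A x - ind B x) * (ind A (n - x) + ind B (n - x)) := by
    have expand : ∑ x : ZMod m, (ind A x - ind B x) * (ind A (n - x) + ind B (n - x))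
        = ((∑ x : ZMod m, ind A x * ind A (n - x))
            - ∑ x : ZMod m, ind B x * ind B (n - x))
          + ((∑ x : ZMod m, ind A x * ind B (n - x))
            - ∑ x : ZMod m, ind B x * ind A (n - x)) := by
      rw [← Finset.sum_sub_distrib, ← Finset.sum_sub_distrib, ← Finset.sum_add_distrib]
      exact Finset.sum_congr rfl fun x _ => by ring
    rw [expand, hAB, rord_eq_sum, rord_eq_sum]
    ring
  have key : ∀ c : ZMod m, ∑ x : ZMod m,
      (ind A x - ind B x) * (if n - x = c then 1 else 0) = ind A (n - c) - ind B (n - c) := by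
    intro c
    rw [Finset.sum_eq_single (n - c)]
    · simp [sub_sub_cancel]
    · intro x _ hx
      have hne : n - x ≠ c := fun hc => hx (by rw [← hc]; ring)
      simp [hne]
    · simp
  have hmid : ∑ x : ZMod m, (ind A x - ind B x) * (ind A (n - x) + ind B (n - x))
      = (∑ x : ZMod m, (ind A x - ind B x))
        + (ind A (n - r) - ind B (n - r))
        + (ind A (n - (r + h)) - ind B (n - (r + h))) := by
    have : ∀ x : ZMod m, (ind A x - ind B x) * (ind A (n - x) + ind B (n - x))
        = (ind A x - ind B x)
          + (ind A x - ind B x) * (if n - x = r then 1 else 0)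
          + (ind A x - ind B x) * (if n - x = r + h then 1 else 0) := by
      intro x
      rw [ind_add_ind hm A B hU r hI (n - x)]
      ring
    rw [Finset.sum_congr rfl fun x _ => this x, Finset.sum_add_distrib,
      Finset.sum_add_distrib, key r, key (r + h)]
  have hd : ((A.filter (fun a => a + a = n)).card : ℤ)
        - ((B.filter (fun a => a + a = n)).card : ℤ)
      = ∑ x : ZMod m, (if x + x = n then ind A x - ind B x else 0) := by
    rw [diag_eq_sum, diag_eq_sum, ← Finset.sum_sub_distrib]
    exact Finset.sum_congr rfl fun x _ => by split <;> simp
  rw [← hh] at *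
  linarith [e1, e2, hard, hmid, hd]

include hm hU hI in
lemma phi_zero (hRf : ∀ n : ZMod m, Rf A n = Rf B n) :
    ∀ x : ZMod m, (ind A x - ind B x)
      + (ind A (x + ((m / 2 : ℕ) : ZMod m)) - ind B (x + ((m / 2 : ℕ) : ZMod m))) = 0 := by
  classical
  obtain ⟨h, hh⟩ : ∃ h : ZMod m, h = ((m / 2 : ℕ) : ZMod m) := ⟨_, rfl⟩
  obtain ⟨f, hfa⟩ : ∃ f : ZMod m → ℤ, ∀ x, f x = ind A x - ind B x := ⟨_, fun _ => rfl⟩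
  rw [← hh]
  have hE0 : ∀ n : ZMod m, (∑ x : ZMod m, f x) + f (n - r) + f (n - (r + h))
      + (∑ x : ZMod m, if x + x = n then f x else 0) = 0 := by
    intro n
    have hM := master hm A B hU r hI n
    rw [hRf n, ← hh] at hM
    simp only [hfa]
    linarith [hM]
  have hsum_shift : ∀ c : ZMod m, ∑ n : ZMod m, f (n - c) = ∑ n : ZMod m, f n := by
    intro c
    exact Fintype.sum_equiv (Equiv.subRight c) _ _ (fun n => rfl)
  have hsum_diag : ∑ n : ZMod m, (∑ x : ZMod m, if x + x = n then f x else 0)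
      = ∑ x : ZMod m, f x := by
    rw [Finset.sum_comm]
    refine Finset.sum_congr rfl fun x _ => ?_
    rw [Finset.sum_ite_eq Finset.univ (x + x) (fun _ => f x)]
    simp
  have hS : (∑ x : ZMod m, f x) = 0 := by
    have htot : ∑ n : ZMod m, ((∑ x : ZMod m, f x) + f (n - r) + f (n - (r + h))
        + (∑ x : ZMod m, if x + x = n then f x else 0)) = 0 :=
      Finset.sum_eq_zero fun n _ => hE0 n
    rw [Finset.sum_add_distrib, Finset.sum_add_distrib, Finset.sum_add_distrib,
      hsum_shift r, hsum_shift (r + h), hsum_diag, Finset.sum_const] at htot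
    have hcard : (Finset.univ : Finset (ZMod m)).card = m := by
      simp [ZMod.card]
    rw [hcard, nsmul_eq_mul] at htot
    have hm3 : ((m : ℤ) + 3) * (∑ x : ZMod m, f x) = 0 := by linarith [htot]
    have : ((m : ℤ) + 3) ≠ 0 := by positivity
    exact (mul_eq_zero.mp hm3).resolve_left this
  have hE : ∀ n : ZMod m, f (n - r) + f (n - (r + h))
      + (∑ x : ZMod m, if x + x = n then f x else 0) = 0 := by
    intro n; have := hE0 n; rw [hS] at this; linarith [this]
  -- Fourier side
  obtain ⟨e, he⟩ : ∃ e : AddChar (ZMod m) ℂ, e = ZMod.stdAddChar := ⟨_, rfl⟩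
  have hnorm : ∀ z : ZMod m, ‖e z‖ = 1 := fun z => by
    rw [he, ZMod.stdAddChar_apply, Circle.norm_coe]
  obtain ⟨fC, hfCa⟩ : ∃ g : ZMod m → ℂ, ∀ x, g x = ((f x : ℤ) : ℂ) := ⟨_, fun _ => rfl⟩
  obtain ⟨φC, hφCa⟩ : ∃ g : ZMod m → ℂ, ∀ x, g x = fC x + fC (x + h) := ⟨_, fun _ => rfl⟩
  obtain ⟨F, hFa⟩ : ∃ g : ZMod m → ℂ, ∀ k, g k = ∑ j : ZMod m, e (-(j * k)) * fC j :=
    ⟨_, fun _ => rfl⟩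
  obtain ⟨Φ, hΦa⟩ : ∃ g : ZMod m → ℂ, ∀ k, g k = ∑ j : ZMod m, e (-(j * k)) * φC j :=
    ⟨_, fun _ => rfl⟩
  have hhh : h + h = 0 := by rw [hh]; exact half_add_half hm
  have hnegh : -h = h := neg_eq_of_add_eq_zero_left hhh
  have hshift : ∀ (g : ZMod m → ℂ) (s k : ZMod m),
      ∑ j : ZMod m, e (-(j * k)) * g (j + s) = e (s * k) * ∑ j : ZMod m, e (-(j * k)) * g j := by
    intro g s k
    rw [Finset.mul_sum]
    refine Finset.sum_nbij' (fun j => j + s) (fun j => j - s) (fun a _ => Finset.mem_univ _)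
      (fun a _ => Finset.mem_univ _) (fun a _ => by ring) (fun a _ => by ring) ?_
    intro j _
    have : e (s * k) * e (-((j + s) * k)) = e (-(j * k)) := by
      rw [← AddChar.map_add_eq_mul]; congr 1; ring
    rw [← this]; ring
  have hΦF : ∀ k : ZMod m, Φ k = (1 + e (h * k)) * F k := by
    intro k
    rw [hΦa k]
    have hsp : ∑ j : ZMod m, e (-(j * k)) * φC j
        = (∑ j : ZMod m, e (-(j * k)) * fC j) + ∑ j : ZMod m, e (-(j * k)) * fC (j + h) := by
      rw [← Finset.sum_add_distrib]
      exact Finset.sum_congr rfl fun j _ => by rw [hφCa j]; ring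
    rw [hsp, hshift fC h k, ← hFa k]
    ring
  have hEC : ∀ n : ZMod m, fC (n - r) + fC (n - (r + h))
      + (∑ x : ZMod m, if x + x = n then fC x else 0) = 0 := by
    intro n
    have h1 : (∑ x : ZMod m, if x + x = n then fC x else 0)
        = (((∑ x : ZMod m, if x + x = n then f x else 0 : ℤ) : ℤ) : ℂ) := by
      push_cast
      exact Finset.sum_congr rfl fun x _ => by split <;> simp [hfCa]
    rw [hfCa, hfCa, h1]
    exact_mod_cast hE n
  have hF2 : ∀ k : ZMod m, F (2 * k) = -(e ((-r) * k) * Φ k) := by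
    intro k
    have h0 : ∑ n : ZMod m, e (-(n * k)) * (fC (n - r) + fC (n - (r + h))
        + (∑ x : ZMod m, if x + x = n then fC x else 0)) = 0 :=
      Finset.sum_eq_zero fun n _ => by rw [hEC n, mul_zero]
    have hsplit : ∑ n : ZMod m, e (-(n * k)) * (fC (n - r) + fC (n - (r + h))
        + (∑ x : ZMod m, if x + x = n then fC x else 0))
        = (∑ n : ZMod m, e (-(n * k)) * fC (n - r))
          + (∑ n : ZMod m, e (-(n * k)) * fC (n - (r + h)))
          + ∑ n : ZMod m, e (-(n * k)) * (∑ x : ZMod m, if x + x = n then fC x else 0) := by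
      rw [← Finset.sum_add_distrib, ← Finset.sum_add_distrib]
      exact Finset.sum_congr rfl fun n _ => by ring
    have hT1 : ∑ n : ZMod m, e (-(n * k)) * fC (n - r) = e ((-r) * k) * F k := by
      rw [hFa k, ← hshift fC (-r) k]
      exact Finset.sum_congr rfl fun n _ => by rw [sub_eq_add_neg]
    have hT2 : ∑ n : ZMod m, e (-(n * k)) * fC (n - (r + h))
        = e ((-(r + h)) * k) * F k := by
      rw [hFa k, ← hshift fC (-(r + h)) k]
      exact Finset.sum_congr rfl fun n _ => by rw [sub_eq_add_neg]
    have hT3 : ∑ n : ZMod m, e (-(n * k)) * (∑ x : ZMod m, if x + x = n then fC x else 0)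
        = F (2 * k) := by
      have hmove : ∀ n : ZMod m, e (-(n * k)) * (∑ x : ZMod m, if x + x = n then fC x else 0)
          = ∑ x : ZMod m, if x + x = n then e (-(n * k)) * fC x else 0 := by
        intro n
        rw [Finset.mul_sum]
        exact Finset.sum_congr rfl fun x _ => by rw [mul_ite, mul_zero]
      rw [Finset.sum_congr rfl fun n _ => hmove n, Finset.sum_comm, hFa (2 * k)]
      refine Finset.sum_congr rfl fun x _ => ?_
      rw [Finset.sum_ite_eq Finset.univ (x + x) (fun n => e (-(n * k)) * fC x)]
      simp only [Finset.mem_univ, if_true]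
      congr 2
      ring
    have hsplit2 : e ((-(r + h)) * k) = e ((-r) * k) * e (h * k) := by
      rw [show (-(r + h)) * k = -r * k + (-h) * k from by ring, hnegh,
        AddChar.map_add_eq_mul]
    rw [hsplit, hT1, hT2, hT3, hsplit2] at h0
    rw [hΦF k]
    linear_combination h0
  have hgrow : ∀ k : ZMod m, ‖Φ (2 * k)‖ = 2 * ‖Φ k‖ := by
    intro k
    have h2k : h * (2 * k) = 0 := by
      have : h * (2 * k) = (h + h) * k := by ring
      rw [this, hhh, zero_mul]
    have hx : Φ (2 * k) = (1 + e (h * (2 * k))) * F (2 * k) := hΦF (2 * k)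
    rw [h2k, AddChar.map_zero_eq_one, hF2 k] at hx
    rw [hx, norm_mul, norm_neg, norm_mul, hnorm]
    norm_num
  have habs : ∀ x : ZMod m, ‖fC x‖ ≤ 1 := by
    intro x
    rw [hfCa x, Complex.norm_intCast]
    have h1 : |f x| ≤ 1 := by rw [hfa x]; unfold ind; split <;> split <;> simp
    calc |((f x : ℤ) : ℝ)| = ((|f x| : ℤ) : ℝ) := by push_cast; rfl
      _ ≤ 1 := by exact_mod_cast h1
  have hbound : ∀ k : ZMod m, ‖Φ k‖ ≤ 2 * m := by
    intro k
    rw [hΦa k]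
    calc ‖∑ j : ZMod m, e (-(j * k)) * φC j‖
        ≤ ∑ j : ZMod m, ‖e (-(j * k)) * φC j‖ := norm_sum_le _ _
      _ ≤ ∑ _j : ZMod m, 2 := by
          refine Finset.sum_le_sum fun j _ => ?_
          rw [norm_mul, hnorm, one_mul, hφCa j]
          calc ‖fC j + fC (j + h)‖ ≤ ‖fC j‖ + ‖fC (j + h)‖ := norm_add_le _ _
            _ ≤ 2 := by linarith [habs j, habs (j + h)]
      _ = 2 * m := by
          rw [Finset.sum_const, Finset.card_univ, ZMod.card]
          push_cast; ring
  have hpow : ∀ (t : ℕ) (k : ZMod m), ‖Φ ((2 : ZMod m) ^ t * k)‖ = 2 ^ t * ‖Φ k‖ := by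
    intro t
    induction t with
    | zero => intro k; simp
    | succ t ih =>
        intro k
        have hre : (2 : ZMod m) ^ (t + 1) * k = 2 * ((2 : ZMod m) ^ t * k) := by ring
        rw [hre, hgrow, ih k, pow_succ]
        ring
  have hΦ0 : ∀ k : ZMod m, Φ k = 0 := by
    intro k
    by_contra hc
    have hcpos : 0 < ‖Φ k‖ := norm_pos_iff.mpr hc
    obtain ⟨t, ht⟩ := pow_unbounded_of_one_lt ((2 * m) / ‖Φ k‖) (one_lt_two (α := ℝ))
    have hlt : 2 * (m : ℝ) < 2 ^ t * ‖Φ k‖ := by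
      rwa [div_lt_iff₀ hcpos] at ht
    have hb := hbound ((2 : ZMod m) ^ t * k)
    rw [hpow t k] at hb
    linarith
  have hφC0 : φC = 0 := by
    have hdft : ZMod.dft φC = 0 := by
      funext k
      have hxx : ZMod.dft φC k = Φ k := by
        rw [ZMod.dft_apply, hΦa k, he]
        exact Finset.sum_congr rfl fun j _ => by rw [smul_eq_mul]
      rw [Pi.zero_apply, hxx]
      exact hΦ0 k
    exact (LinearEquiv.map_eq_zero_iff _).mp hdft
  intro x
  have hx := congrFun hφC0 x
  rw [hφCa x, hfCa x, hfCa (x + h), Pi.zero_apply] at hx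
  have h0 : ((f x + f (x + h) : ℤ) : ℂ) = 0 := by push_cast; simpa using hx
  have hz : f x + f (x + h) = 0 := by exact_mod_cast h0
  rw [hfa x, hfa (x + h)] at hz
  linarith [hz]

end main
end Aux

theorem stmt5 (m : ℕ) [NeZero m] (hm : Even m) (A B : Finset (ZMod m))
    (hU : A ∪ B = Finset.univ) (r : ZMod m)
    (hI : A ∩ B = {r, r + ((m / 2 : ℕ) : ZMod m)}) :
    (∀ n : ZMod m, Rf A n = Rf B n) ↔
      B = A.image (fun a => a + ((m / 2 : ℕ) : ZMod m)) := by
  have hhh : ((m / 2 : ℕ) : ZMod m) + ((m / 2 : ℕ) : ZMod m) = 0 := Aux.half_add_half hm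
  constructor
  · intro hRf
    have hphi := Aux.phi_zero hm A B hU r hI hRf
    ext x
    simp only [Finset.mem_image]
    constructor
    · intro hxB
      refine ⟨x - ((m / 2 : ℕ) : ZMod m), ?_, by ring⟩
      by_contra hxA
      have hxB' : x - ((m / 2 : ℕ) : ZMod m) ∈ B :=
        (Aux.mem_or A B hU _).resolve_left hxA
      have hp := hphi (x - ((m / 2 : ℕ) : ZMod m))
      rw [show x - ((m / 2 : ℕ) : ZMod m) + ((m / 2 : ℕ) : ZMod m) = x from by ring] at hp
      by_cases hxA2 : x ∈ A <;> simp [Aux.ind, hxA, hxB', hxB, hxA2] at hp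
    · rintro ⟨a, haA, rfl⟩
      by_contra hxB
      have hxA : a + ((m / 2 : ℕ) : ZMod m) ∈ A :=
        (Aux.mem_or A B hU _).resolve_right hxB
      have hp := hphi a
      by_cases hBa : a ∈ B <;> simp [Aux.ind, haA, hxA, hxB, hBa] at hp
  · intro hB n
    have him : ∀ x : ZMod m, x ∈ B ↔ x - ((m / 2 : ℕ) : ZMod m) ∈ A := by
      intro x
      rw [hB]
      simp only [Finset.mem_image]
      constructor
      · rintro ⟨a, ha, rfl⟩
        rwa [show a + ((m / 2 : ℕ) : ZMod m) - ((m / 2 : ℕ) : ZMod m) = a from by ring]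
      · intro hx
        exact ⟨_, hx, by ring⟩
    have hOrd : Rord B B n = Rord A A n := by
      have hZ : (Rord B B n : ℤ) = (Rord A A n : ℤ) := by
        rw [Aux.rord_eq_sum, Aux.rord_eq_sum]
        have hindB : ∀ x : ZMod m,
            Aux.ind B x = Aux.ind A (x - ((m / 2 : ℕ) : ZMod m)) := by
          intro x
          by_cases hx : x ∈ B
          · simp [Aux.ind, hx, (him x).1 hx]
          · have hx' : x - ((m / 2 : ℕ) : ZMod m) ∉ A := fun c => hx ((him x).2 c)
            simp [Aux.ind, hx, hx']
        rw [Finset.sum_congr rfl fun x _ => by rw [hindB x, hindB (n - x)]]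
        refine Finset.sum_nbij' (fun x => x - ((m / 2 : ℕ) : ZMod m))
          (fun y => y + ((m / 2 : ℕ) : ZMod m)) (fun a _ => Finset.mem_univ _)
          (fun a _ => Finset.mem_univ _) (fun a _ => by ring) (fun a _ => by ring) ?_
        intro x _
        congr 2
        linear_combination -hhh
      exact_mod_cast hZ
    have hDiag : (B.filter (fun a => a + a = n)).card
        = (A.filter (fun a => a + a = n)).card := by
      apply Finset.card_bij' (fun a _ => a - ((m / 2 : ℕ) : ZMod m))
        (fun a _ => a + ((m / 2 : ℕ) : ZMod m))
      · intro a ha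
        simp only [Finset.mem_filter] at ha ⊢
        exact ⟨(him a).1 ha.1, by linear_combination ha.2 - hhh⟩
      · intro a ha
        simp only [Finset.mem_filter] at ha ⊢
        refine ⟨(him (a + ((m / 2 : ℕ) : ZMod m))).2 ?_, by linear_combination ha.2 + hhh⟩
        rw [show a + ((m / 2 : ℕ) : ZMod m) - ((m / 2 : ℕ) : ZMod m) = a from by ring]
        exact ha.1
      · intro a _; ring
      · intro a _; ring
    have h2 : 2 * Rf A n = 2 * Rf B n := by
      rw [Aux.two_rf, Aux.two_rf, hDiag, hOrd]
    omega
end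

section
/- Let m be a positive even integer with m ≡ 0 (mod 4), and let A, B ⊆ ℤ/mℤ with A ∪ B = ℤ/mℤ and A ∩ B = {r, r + m/2}. Suppose R_A(n) = R_B(n) for all n ∈ ℤ/mℤ. Then for every integer t with t ≡ r + 1 (mod 2), χ_A(t) + χ_A(t + m/2) = 1. -/
def chiF {m : ℕ} (C : Finset (ZMod m)) (x : ZMod m) : ℤ := if x ∈ C then 1 else 0

lemma collapse {m : ℕ} [NeZero m] (f : ZMod m → ℤ) (c : ZMod m) :
    ∑ y : ZMod m, f y * (if y = c then (1:ℤ) else 0) = f c := by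
  simp [mul_ite]

lemma sum_ind_collapse {m : ℕ} [NeZero m] (f : ZMod m → ℤ) (c n : ZMod m) :
    ∑ x : ZMod m, f x * (if x + c = n then (1:ℤ) else 0) = f (n - c) := by
  have hcond : ∀ x : ZMod m, (if x + c = n then (1:ℤ) else 0) = (if x = n - c then (1:ℤ) else 0) :=
    fun x => if_congr ⟨fun hh => by rw [← hh]; ring, fun hh => by rw [hh]; ring⟩ rfl rfl
  rw [Finset.sum_congr rfl fun x _ => by rw [hcond x]]
  exact collapse f _

lemma sum_ind_eq {m : ℕ} [NeZero m] (x n : ZMod m) :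
    ∑ y : ZMod m, (if x + y = n then (1:ℤ) else 0) = 1 := by
  have hcond : ∀ y : ZMod m, (if x + y = n then (1:ℤ) else 0) = (if y = n - x then (1:ℤ) else 0) :=
    fun y => if_congr ⟨fun hh => by rw [← hh]; ring, fun hh => by rw [hh]; ring⟩ rfl rfl
  rw [Finset.sum_congr rfl fun y _ => by rw [hcond y]]
  simp

lemma sum_chiF {m : ℕ} [NeZero m] (C : Finset (ZMod m)) (F : ZMod m → ℤ) :
    ∑ x : ZMod m, chiF C x * F x = ∑ x ∈ C, F x := by
  rw [show (∑ x : ZMod m, chiF C x * F x) = ∑ x : ZMod m, if x ∈ C then F x else 0 by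
    refine Finset.sum_congr rfl fun x _ => ?_; simp [chiF, ite_mul]]
  rw [Finset.sum_ite_mem, Finset.univ_inter]

lemma card_filter_prod {m : ℕ} [NeZero m] (C D : Finset (ZMod m)) (P : ZMod m × ZMod m → Prop)
    [DecidablePred P] :
    ((((C ×ˢ D).filter P).card : ℤ)) =
      ∑ x : ZMod m, ∑ y : ZMod m, chiF C x * (chiF D y * (if P (x, y) then 1 else 0)) := by
  rw [Finset.card_filter]
  push_cast
  rw [Finset.sum_product]
  symm
  calc ∑ x : ZMod m, ∑ y : ZMod m, chiF C x * (chiF D y * (if P (x, y) then 1 else 0))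
      = ∑ x : ZMod m, chiF C x * ∑ y : ZMod m, chiF D y * (if P (x, y) then 1 else 0) := by
        simp [Finset.mul_sum]
    _ = ∑ x ∈ C, ∑ y : ZMod m, chiF D y * (if P (x, y) then 1 else 0) := by
        rw [sum_chiF]
    _ = ∑ x ∈ C, ∑ y ∈ D, (if P (x, y) then 1 else 0) := by
        refine Finset.sum_congr rfl fun x _ => ?_; rw [sum_chiF]

lemma rord_sum {m : ℕ} [NeZero m] (C D : Finset (ZMod m)) (n : ZMod m) :
    ((Rord C D n : ℤ)) =
      ∑ x : ZMod m, ∑ y : ZMod m, chiF C x * (chiF D y * (if x + y = n then 1 else 0)) := by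
  exact card_filter_prod C D (fun p => p.1 + p.2 = n)

lemma two_rf {m : ℕ} [NeZero m] (C : Finset (ZMod m)) (n : ZMod m) :
    2 * (Rf C n : ℤ) = (Rord C C n : ℤ) + ∑ c : ZMod m, chiF C c * (if c + c = n then 1 else 0) := by
  have hrf : (Rf C n : ℤ) =
      ∑ x : ZMod m, ∑ y : ZMod m, chiF C x * (chiF C y * (if x + y = n ∧ x.val ≤ y.val then 1 else 0)) :=
    card_filter_prod C C (fun p => p.1 + p.2 = n ∧ p.1.val ≤ p.2.val)
  have hswap : (Rf C n : ℤ) =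
      ∑ x : ZMod m, ∑ y : ZMod m, chiF C x * (chiF C y * (if x + y = n ∧ y.val ≤ x.val then 1 else 0)) := by
    rw [hrf, Finset.sum_comm]
    refine Finset.sum_congr rfl fun x _ => Finset.sum_congr rfl fun y _ => ?_
    rw [add_comm y x]
    ring
  have hdiag : ∀ x y : ZMod m, ((if x + y = n ∧ x.val ≤ y.val then (1:ℤ) else 0)
      + (if x + y = n ∧ y.val ≤ x.val then 1 else 0))
      = (if x + y = n then 1 else 0) + (if x + y = n ∧ x = y then 1 else 0) := by
    intro x y
    by_cases hP : x + y = n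
    · by_cases hxy : x = y
      · subst hxy; simp [hP]
      · have hv : x.val ≠ y.val := fun hv => hxy (ZMod.val_injective _ hv)
        simp only [hP, true_and, hxy, and_false, if_false, if_true]
        split_ifs <;> omega
    · simp [hP]
  have hinner : ∀ x : ZMod m,
      ∑ y : ZMod m, chiF C x * (chiF C y * (if x + y = n ∧ x = y then 1 else 0))
        = chiF C x * (if x + x = n then 1 else 0) := by
    intro x
    have h1 : ∀ y : ZMod m, chiF C x * (chiF C y * (if x + y = n ∧ x = y then 1 else 0))
        = (chiF C x * chiF C y * (if x + x = n then 1 else 0)) * (if y = x then 1 else 0) := by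
      intro y
      by_cases hy : y = x
      · subst hy; by_cases hn : y + y = n <;> simp [hn]
      · have : ¬ (x + y = n ∧ x = y) := fun ⟨_, hxy⟩ => hy hxy.symm
        simp [this, hy]
    rw [Finset.sum_congr rfl fun y _ => h1 y,
      collapse (fun y => chiF C x * chiF C y * (if x + x = n then 1 else 0)) x]
    unfold chiF; split_ifs <;> ring
  calc 2 * (Rf C n : ℤ)
      = ∑ x : ZMod m, ∑ y : ZMod m, (chiF C x * (chiF C y * (if x + y = n ∧ x.val ≤ y.val then 1 else 0))
          + chiF C x * (chiF C y * (if x + y = n ∧ y.val ≤ x.val then 1 else 0))) := by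
        rw [two_mul]
        nth_rewrite 1 [hrf]
        rw [hswap]
        rw [← Finset.sum_add_distrib]
        refine Finset.sum_congr rfl fun x _ => ?_
        rw [← Finset.sum_add_distrib]
    _ = ∑ x : ZMod m, ∑ y : ZMod m, (chiF C x * (chiF C y * (if x + y = n then 1 else 0))
          + chiF C x * (chiF C y * (if x + y = n ∧ x = y then 1 else 0))) := by
        refine Finset.sum_congr rfl fun x _ => Finset.sum_congr rfl fun y _ => ?_
        rw [← mul_add, ← mul_add, hdiag x y, mul_add, mul_add]
    _ = (Rord C C n : ℤ) + ∑ c : ZMod m, chiF C c * (if c + c = n then 1 else 0) := by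
        rw [Finset.sum_congr rfl fun x (_ : x ∈ Finset.univ) => Finset.sum_add_distrib]
        rw [Finset.sum_add_distrib, rord_sum]
        congr 1
        exact Finset.sum_congr rfl fun x _ => hinner x

lemma keyid {m : ℕ} [NeZero m] (A B : Finset (ZMod m)) (r₀ h' : ZMod m)
    (hchi : ∀ x : ZMod m, chiF A x + chiF B x
      = 1 + ((if x = r₀ then (1:ℤ) else 0) + (if x = r₀ + h' then 1 else 0)))
    (h : ∀ n : ZMod m, Rf A n = Rf B n) (n : ZMod m) :
    (∑ x : ZMod m, (chiF A x - chiF B x)) + (chiF A (n - r₀) - chiF B (n - r₀))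
      + (chiF A (n - r₀ - h') - chiF B (n - r₀ - h'))
      + (∑ c : ZMod m, (chiF A c - chiF B c) * (if c + c = n then 1 else 0)) = 0 := by
  have hRfeq : (Rf A n : ℤ) = (Rf B n : ℤ) := by exact_mod_cast h n
  have hRR : (Rord A A n : ℤ) - (Rord B B n : ℤ)
      = (∑ c : ZMod m, chiF B c * (if c + c = n then 1 else 0))
        - ∑ c : ZMod m, chiF A c * (if c + c = n then 1 else 0) := by
    have e1 := two_rf A n
    have e2 := two_rf B n
    linarith
  have hD : (Rord A A n : ℤ) - (Rord B B n : ℤ)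
      = (∑ x : ZMod m, (chiF A x - chiF B x)) + (chiF A (n - r₀) - chiF B (n - r₀))
        + (chiF A (n - r₀ - h') - chiF B (n - r₀ - h')) := by
    have hswap2 : (∑ x : ZMod m, ∑ y : ZMod m, chiF B x * ((chiF A y - chiF B y) * (if x + y = n then 1 else 0)))
        = ∑ x : ZMod m, ∑ y : ZMod m, (chiF A x - chiF B x) * (chiF B y * (if x + y = n then 1 else 0)) := by
      rw [Finset.sum_comm]
      refine Finset.sum_congr rfl fun x _ => Finset.sum_congr rfl fun y _ => ?_
      rw [add_comm y x]
      ring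
    calc (Rord A A n : ℤ) - (Rord B B n : ℤ)
        = ∑ x : ZMod m, ∑ y : ZMod m,
            (chiF A x * (chiF A y * (if x + y = n then 1 else 0))
              - chiF B x * (chiF B y * (if x + y = n then 1 else 0))) := by
          rw [rord_sum, rord_sum, ← Finset.sum_sub_distrib]
          exact Finset.sum_congr rfl fun x _ => (Finset.sum_sub_distrib _ _).symm
      _ = ∑ x : ZMod m, ∑ y : ZMod m,
            ((chiF A x - chiF B x) * (chiF A y * (if x + y = n then 1 else 0))
              + chiF B x * ((chiF A y - chiF B y) * (if x + y = n then 1 else 0))) := by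
          refine Finset.sum_congr rfl fun x _ => Finset.sum_congr rfl fun y _ => ?_
          ring
      _ = (∑ x : ZMod m, ∑ y : ZMod m, (chiF A x - chiF B x) * (chiF A y * (if x + y = n then 1 else 0)))
            + ∑ x : ZMod m, ∑ y : ZMod m, chiF B x * ((chiF A y - chiF B y) * (if x + y = n then 1 else 0)) := by
          rw [← Finset.sum_add_distrib]
          exact Finset.sum_congr rfl fun x _ => Finset.sum_add_distrib
      _ = ∑ x : ZMod m, ∑ y : ZMod m,
            (chiF A x - chiF B x) * ((chiF A y + chiF B y) * (if x + y = n then 1 else 0)) := by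
          rw [hswap2, ← Finset.sum_add_distrib]
          refine Finset.sum_congr rfl fun x _ => ?_
          rw [← Finset.sum_add_distrib]
          refine Finset.sum_congr rfl fun y _ => ?_
          ring
      _ = ∑ x : ZMod m, ∑ y : ZMod m,
            ((chiF A x - chiF B x) * (if x + y = n then 1 else 0)
              + (((chiF A x - chiF B x) * (if x + y = n then 1 else 0)) * (if y = r₀ then 1 else 0)
                + ((chiF A x - chiF B x) * (if x + y = n then 1 else 0)) * (if y = r₀ + h' then 1 else 0))) := by
          refine Finset.sum_congr rfl fun x _ => Finset.sum_congr rfl fun y _ => ?_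
          rw [hchi y]
          ring
      _ = (∑ x : ZMod m, (chiF A x - chiF B x)) + (chiF A (n - r₀) - chiF B (n - r₀))
            + (chiF A (n - r₀ - h') - chiF B (n - r₀ - h')) := by
          rw [Finset.sum_congr rfl fun x (_ : x ∈ Finset.univ) => Finset.sum_add_distrib]
          rw [Finset.sum_add_distrib]
          rw [Finset.sum_congr rfl fun x (_ : x ∈ Finset.univ) => Finset.sum_add_distrib]
          rw [Finset.sum_add_distrib]
          have e1 : (∑ x : ZMod m, ∑ y : ZMod m, (chiF A x - chiF B x) * (if x + y = n then 1 else 0))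
              = ∑ x : ZMod m, (chiF A x - chiF B x) := by
            refine Finset.sum_congr rfl fun x _ => ?_
            rw [← Finset.mul_sum, sum_ind_eq x n, mul_one]
          have e2 : (∑ x : ZMod m, ∑ y : ZMod m,
              ((chiF A x - chiF B x) * (if x + y = n then 1 else 0)) * (if y = r₀ then 1 else 0))
              = chiF A (n - r₀) - chiF B (n - r₀) := by
            rw [Finset.sum_congr rfl fun x (_ : x ∈ Finset.univ) =>
              collapse (fun y => (chiF A x - chiF B x) * (if x + y = n then 1 else 0)) r₀]
            exact sum_ind_collapse (fun x => chiF A x - chiF B x) r₀ n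
          have e3 : (∑ x : ZMod m, ∑ y : ZMod m,
              ((chiF A x - chiF B x) * (if x + y = n then 1 else 0)) * (if y = r₀ + h' then 1 else 0))
              = chiF A (n - r₀ - h') - chiF B (n - r₀ - h') := by
            rw [Finset.sum_congr rfl fun x (_ : x ∈ Finset.univ) =>
              collapse (fun y => (chiF A x - chiF B x) * (if x + y = n then 1 else 0)) (r₀ + h')]
            rw [sum_ind_collapse (fun x => chiF A x - chiF B x) (r₀ + h') n, sub_sub]
          rw [e1, e2, e3]
          ring
  rw [hD] at hRR
  have hflip : (∑ c : ZMod m, (chiF A c - chiF B c) * (if c + c = n then 1 else 0))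
      = (∑ c : ZMod m, chiF A c * (if c + c = n then 1 else 0))
        - ∑ c : ZMod m, chiF B c * (if c + c = n then 1 else 0) := by
    rw [← Finset.sum_sub_distrib]
    exact Finset.sum_congr rfl fun c _ => by ring
  rw [hflip]
  linarith

lemma sum_zero_of_keyid {m : ℕ} [NeZero m] (A B : Finset (ZMod m)) (r₀ h' : ZMod m)
    (hchi : ∀ x : ZMod m, chiF A x + chiF B x
      = 1 + ((if x = r₀ then (1:ℤ) else 0) + (if x = r₀ + h' then 1 else 0)))
    (h : ∀ n : ZMod m, Rf A n = Rf B n) :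
    (∑ x : ZMod m, (chiF A x - chiF B x)) = 0 := by
  set S : ℤ := ∑ x : ZMod m, (chiF A x - chiF B x) with hS
  have htot : ∑ n : ZMod m, ((S + (chiF A (n - r₀) - chiF B (n - r₀))
      + (chiF A (n - r₀ - h') - chiF B (n - r₀ - h'))
      + (∑ c : ZMod m, (chiF A c - chiF B c) * (if c + c = n then 1 else 0)))) = 0 := by
    rw [Finset.sum_congr rfl fun n (_ : n ∈ Finset.univ) => keyid A B r₀ h' hchi h n]
    exact Finset.sum_const_zero
  have t1 : ∑ n : ZMod m, (chiF A (n - r₀) - chiF B (n - r₀)) = S := by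
    exact Equiv.sum_comp (Equiv.subRight r₀) (fun x => chiF A x - chiF B x)
  have t2 : ∑ n : ZMod m, (chiF A (n - r₀ - h') - chiF B (n - r₀ - h')) = S := by
    rw [Finset.sum_congr rfl fun n (_ : n ∈ Finset.univ) => by rw [sub_sub]]
    exact Equiv.sum_comp (Equiv.subRight (r₀ + h')) (fun x => chiF A x - chiF B x)
  have t3 : ∑ n : ZMod m, (∑ c : ZMod m, (chiF A c - chiF B c) * (if c + c = n then 1 else 0)) = S := by
    rw [Finset.sum_comm]
    refine Finset.sum_congr rfl fun c _ => ?_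
    rw [← Finset.mul_sum]
    have : ∑ n : ZMod m, (if c + c = n then (1:ℤ) else 0) = 1 := by
      have hcond : ∀ n : ZMod m, (if c + c = n then (1:ℤ) else 0) = (if n = c + c then (1:ℤ) else 0) :=
        fun n => if_congr eq_comm rfl rfl
      rw [Finset.sum_congr rfl fun n _ => hcond n]
      simp
    rw [this, mul_one]
  rw [Finset.sum_add_distrib, Finset.sum_add_distrib, Finset.sum_add_distrib,
    t1, t2, t3, Finset.sum_const, Finset.card_univ, ZMod.card] at htot
  have hm : 0 < m := Nat.pos_of_ne_zero (NeZero.ne m)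
  have : ((m : ℤ) + 3) * S = 0 := by
    rw [nsmul_eq_mul] at htot
    linarith [htot]
  rcases mul_eq_zero.mp this with hc | hc
  · exfalso; omega
  · exact hc

theorem stmt11 (m : ℕ) [NeZero m] (hm : m % 4 = 0) (A B : Finset (ZMod m))
    (hU : A ∪ B = Finset.univ) (r : ℤ)
    (hI : A ∩ B = {(r : ZMod m), (r : ZMod m) + ((m / 2 : ℕ) : ZMod m)})
    (h : ∀ n : ZMod m, Rf A n = Rf B n) :
    ∀ t : ℤ, t ≡ r + 1 [ZMOD 2] → chi A t + chi A (t + (m : ℤ) / 2) = 1 := by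
  intro t ht
  have hmpos : 0 < m := Nat.pos_of_ne_zero (NeZero.ne m)
  have hm2 : (2 : ℕ) ∣ m := by omega
  have h2half : (2 : ℕ) ∣ m / 2 := by omega
  set r₀ : ZMod m := (r : ZMod m) with hr₀
  set h' : ZMod m := ((m / 2 : ℕ) : ZMod m) with hh'
  set t₀ : ZMod m := (t : ZMod m) with ht₀
  -- h' ≠ 0
  have hhalf_ne : h' ≠ 0 := by
    rw [hh', Ne, ZMod.natCast_eq_zero_iff]
    intro hd
    have := Nat.le_of_dvd (by omega) hd
    omega
  have hne : r₀ ≠ r₀ + h' := fun e => hhalf_ne (left_eq_add.mp e)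
  -- membership in A ∩ B
  have hmemI : ∀ x : ZMod m, (x ∈ A ∧ x ∈ B) ↔ (x = r₀ ∨ x = r₀ + h') := by
    intro x
    rw [← Finset.mem_inter, hI]
    simp [Finset.mem_insert]
  have hchi : ∀ x : ZMod m, chiF A x + chiF B x
      = 1 + ((if x = r₀ then (1:ℤ) else 0) + (if x = r₀ + h' then 1 else 0)) := by
    intro x
    have hx : x ∈ A ∨ x ∈ B := by
      have hxu := Finset.mem_univ x
      rw [← hU] at hxu
      exact Finset.mem_union.mp hxu
    by_cases hA : x ∈ A <;> by_cases hB : x ∈ B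
    · rcases (hmemI x).mp ⟨hA, hB⟩ with rfl | rfl
      · simp [chiF, hA, hB, hne]
      · simp [chiF, hA, hB, (Ne.symm hne)]
    · have hn : ¬(x = r₀ ∨ x = r₀ + h') := fun hc => hB (((hmemI x).mpr hc).2)
      push_neg at hn
      simp [chiF, hA, hB, hn.1, hn.2]
    · have hn : ¬(x = r₀ ∨ x = r₀ + h') := fun hc => hA (((hmemI x).mpr hc).1)
      push_neg at hn
      simp [chiF, hA, hB, hn.1, hn.2]
    · exact absurd hx (by simp [hA, hB])
  -- parity via reduction mod 2
  set φ : ZMod m →+* ZMod 2 := ZMod.castHom hm2 (ZMod 2) with hφ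
  have hφt : φ t₀ = ((t : ℤ) : ZMod 2) := by rw [ht₀]; exact map_intCast φ t
  have hφr : φ r₀ = ((r : ℤ) : ZMod 2) := by rw [hr₀]; exact map_intCast φ r
  have hφh : φ h' = 0 := by
    rw [hh', map_natCast φ, ZMod.natCast_eq_zero_iff]
    exact h2half
  have htmod : ((t : ℤ) : ZMod 2) = ((r + 1 : ℤ) : ZMod 2) :=
    (ZMod.intCast_eq_intCast_iff _ _ _).mpr ht
  have hr1 : ((r + 1 : ℤ) : ZMod 2) ≠ ((r : ℤ) : ZMod 2) := by
    intro e
    rw [ZMod.intCast_eq_intCast_iff] at e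
    simp only [Int.ModEq] at e
    omega
  have htr : t₀ ≠ r₀ := by
    intro e
    apply hr1
    rw [← htmod, ← hφt, e, hφr]
  have htr2 : t₀ ≠ r₀ + h' := by
    intro e
    apply hr1
    rw [← htmod, ← hφt, e, map_add, hφr, hφh, add_zero]
  have htr3 : t₀ + h' ≠ r₀ := by
    intro e
    apply hr1
    rw [← htmod, ← hφt]
    have : φ (t₀ + h') = φ r₀ := by rw [e]
    rw [map_add, hφh, add_zero] at this
    rw [this, hφr]
  have htr4 : t₀ + h' ≠ r₀ + h' := fun e => htr (add_right_cancel e)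
  -- apply key identity at n = t₀ + r₀ + h'
  have hS0 := sum_zero_of_keyid A B r₀ h' hchi h
  have hkey := keyid A B r₀ h' hchi h (t₀ + r₀ + h')
  have hodd : ∀ c : ZMod m, c + c ≠ t₀ + r₀ + h' := by
    intro c hc
    have := congrArg φ hc
    rw [map_add, map_add, map_add, hφt, hφr, hφh, add_zero, htmod] at this
    have h2 : φ c + φ c = 0 := by
      have : (2 : ZMod 2) = 0 := by decide
      rw [← two_mul, this, zero_mul]
    rw [h2] at this
    rw [show ((r + 1 : ℤ) : ZMod 2) + ((r : ℤ) : ZMod 2) = ((2 * r + 1 : ℤ) : ZMod 2) by push_cast; ring] at this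
    have := (ZMod.intCast_zmod_eq_zero_iff_dvd _ _).mp this.symm
    omega
  have hdiag0 : (∑ c : ZMod m, (chiF A c - chiF B c) * (if c + c = t₀ + r₀ + h' then (1:ℤ) else 0)) = 0 :=
    Finset.sum_eq_zero fun c _ => by rw [if_neg (hodd c), mul_zero]
  have harg1 : t₀ + r₀ + h' - r₀ = t₀ + h' := by ring
  have harg2 : t₀ + r₀ + h' - r₀ - h' = t₀ := by ring
  rw [hS0, hdiag0, harg2, harg1] at hkey
  -- translate to chiF and finish
  have hc1 : chiF A t₀ + chiF B t₀ = 1 := by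
    rw [hchi t₀, if_neg htr, if_neg htr2]; ring
  have hc2 : chiF A (t₀ + h') + chiF B (t₀ + h') = 1 := by
    rw [hchi (t₀ + h'), if_neg htr3, if_neg htr4]; ring
  have hcast : ((t + (m : ℤ) / 2 : ℤ) : ZMod m) = t₀ + h' := by
    have hdiv : ((m : ℤ) / 2) = ((m / 2 : ℕ) : ℤ) := by
      rw [Int.natCast_ediv]
      norm_num
    rw [hdiv, Int.cast_add, Int.cast_natCast, ht₀, hh']
  have hchiA1 : chi A t = chiF A t₀ := rfl
  have hchiA2 : chi A (t + (m : ℤ) / 2) = chiF A (t₀ + h') := by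
    unfold chi chiF
    rw [hcast]
  rw [hchiA1, hchiA2]
  linarith
end
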